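/- arXiv:1005.5106 — 7 statements merged into one kernel-verified Lean document; each statement's English description precedes it below -/
import Mathlib

section
/- Let X be a metric space, let C > 0 be a real number, and let l, u : X → ℝ be functions with l(p) > 0 and u(p) > 0 for every p ∈ X. Then there exists a C-Lipschitz function r : X → ℝ satisfying l(p) ≤ r(p) ≤ u(p) for all p ∈ X (in particular r is positive) if and only if l(p) − C·d(p,q) ≤ u(q) for all p, q ∈ X. (Kleiner–Lott, 'Locally Collapsed 3-Manifolds', Lemma 6.1.) -/
/-- Kleiner–Lott, "Locally Collapsed 3-Manifolds", Lemma 6.1. -/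
theorem exists_lipschitz_between_iff {X : Type*} [MetricSpace X]
    (C : ℝ) (hC : 0 < C) (l u : X → ℝ)
    (hl : ∀ p : X, 0 < l p) (hu : ∀ p : X, 0 < u p) :
    (∃ r : X → ℝ, (∀ p q : X, |r p - r q| ≤ C * dist p q) ∧
        ∀ p : X, l p ≤ r p ∧ r p ≤ u p) ↔
      ∀ p q : X, l p - C * dist p q ≤ u q := by
  constructor
  · rintro ⟨r, hlip, hbd⟩ p q
    have h1 := (abs_le.mp (hlip p q)).2
    have := (hbd p).1
    have := (hbd q).2
    linarith
  · intro h
    refine ⟨fun q => ⨆ p, (l p - C * dist p q), fun p q => ?_, fun q => ?_⟩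
    · have key : ∀ a b : X, (⨆ p, (l p - C * dist p a)) - (⨆ p, (l p - C * dist p b))
          ≤ C * dist a b := by
        intro a b
        have : Nonempty X := ⟨a⟩
        rw [sub_le_iff_le_add]
        refine ciSup_le fun x => ?_
        have hb : l x - C * dist x b ≤ ⨆ p, (l p - C * dist p b) := by
          refine le_ciSup (f := fun p => l p - C * dist p b) ⟨u b, ?_⟩ x
          rintro y ⟨z, rfl⟩
          exact h z b
        have : C * dist x a ≥ C * dist x b - C * dist a b := by
          have := dist_triangle x a b
          nlinarith [dist_comm a b ▸ this]
        linarith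
      rw [abs_sub_le_iff]
      exact ⟨key p q, by simpa [dist_comm] using key q p⟩
    · constructor
      · have : l q - C * dist q q ≤ ⨆ p, (l p - C * dist p q) := by
          refine le_ciSup (f := fun p => l p - C * dist p q) ⟨u q, ?_⟩ q
          rintro y ⟨z, rfl⟩
          exact h z q
        simpa using this
      · have : Nonempty X := ⟨q⟩
        exact ciSup_le fun x => h x q
end

section
/- Let X₁ and X₂ be metric spaces and let a = (a₁,a₂), b = (b₁,b₂), c = (c₁,c₂) be points of the ℓ²-product X₁ ×₂ X₂ satisfying the triangle equality d(a,c) = d(a,b) + d(b,c). Then the projections satisfy the same triangle equalities, d(a₁,c₁) = d(a₁,b₁) + d(b₁,c₁) and d(a₂,c₂) = d(a₂,b₂) + d(b₂,c₂), and moreover the vectors (d(a₁,b₁), d(a₂,b₂)) and (d(a₁,c₁), d(a₂,c₂)) are linearly dependent in ℝ². (Claim established in the proof of Sublemma 4.4(1) of Kleiner–Lott, 'Locally Collapsed 3-Manifolds'.) -/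
open scoped ENNReal

private lemma key_real (p1 p2 q1 q2 r1 r2 : ℝ)
    (hp1 : 0 ≤ p1) (hp2 : 0 ≤ p2) (hq1 : 0 ≤ q1) (hq2 : 0 ≤ q2)
    (hr1 : 0 ≤ r1) (hr2 : 0 ≤ r2)
    (h1 : r1 ≤ p1 + q1) (h2 : r2 ≤ p2 + q2)
    (h : Real.sqrt (r1 ^ 2 + r2 ^ 2)
        = Real.sqrt (p1 ^ 2 + p2 ^ 2) + Real.sqrt (q1 ^ 2 + q2 ^ 2)) :
    r1 = p1 + q1 ∧ r2 = p2 + q2 ∧ p1 * r2 = p2 * r1 := by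
  set s1 := Real.sqrt (p1 ^ 2 + p2 ^ 2) with hs1def
  set s2 := Real.sqrt (q1 ^ 2 + q2 ^ 2) with hs2def
  have hs1 : s1 ^ 2 = p1 ^ 2 + p2 ^ 2 := Real.sq_sqrt (by positivity)
  have hs2 : s2 ^ 2 = q1 ^ 2 + q2 ^ 2 := Real.sq_sqrt (by positivity)
  have hs1n : 0 ≤ s1 := Real.sqrt_nonneg _
  have hs2n : 0 ≤ s2 := Real.sqrt_nonneg _
  have hsq : (s1 + s2) ^ 2 = r1 ^ 2 + r2 ^ 2 := by
    rw [← h]; exact (Real.sq_sqrt (by positivity))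
  have hprod : p1 * q1 + p2 * q2 ≤ s1 * s2 := by
    rw [hs1def, hs2def, ← Real.sqrt_mul (by positivity)]
    rw [Real.le_sqrt (by positivity) (by positivity)]
    nlinarith [sq_nonneg (p1 * q2 - p2 * q1)]
  have b1 : r1 ^ 2 ≤ (p1 + q1) ^ 2 := by nlinarith
  have b2 : r2 ^ 2 ≤ (p2 + q2) ^ 2 := by nlinarith
  have hexp : s1 ^ 2 + 2 * (s1 * s2) + s2 ^ 2 = r1 ^ 2 + r2 ^ 2 := by linear_combination hsq
  have hle : s1 * s2 ≤ p1 * q1 + p2 * q2 := by linarith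
  have hinner : s1 * s2 = p1 * q1 + p2 * q2 := le_antisymm hle hprod
  have hsum2 : r1 ^ 2 + r2 ^ 2 = (p1 + q1) ^ 2 + (p2 + q2) ^ 2 := by
    linear_combination (-1 : ℝ) * hsq + hs1 + hs2 + 2 * hinner
  have e1sq : r1 ^ 2 = (p1 + q1) ^ 2 := by linarith
  have e2sq : r2 ^ 2 = (p2 + q2) ^ 2 := by linarith
  have e1 : r1 = p1 + q1 := by
    rw [← Real.sqrt_sq hr1, e1sq, Real.sqrt_sq (by positivity)]
  have e2 : r2 = p2 + q2 := by
    rw [← Real.sqrt_sq hr2, e2sq, Real.sqrt_sq (by positivity)]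
  have hcs : (p1 * q1 + p2 * q2) ^ 2 + (p1 * q2 - p2 * q1) ^ 2 = s1 ^ 2 * s2 ^ 2 := by
    rw [hs1, hs2]; ring
  rw [← hinner] at hcs
  have hcross : p1 * q2 - p2 * q1 = 0 := by
    have h0 : (p1 * q2 - p2 * q1) ^ 2 = 0 := by linear_combination hcs
    exact pow_eq_zero_iff (n := 2) (by norm_num) |>.mp h0
  refine ⟨e1, e2, ?_⟩
  rw [e1, e2]; linear_combination hcross

/-- Claim from the proof of Sublemma 4.4(1) of Kleiner–Lott, "Locally Collapsed
3-Manifolds": if three points of an ℓ²-product satisfy the triangle equality,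
then so do their projections, and the pairs of projected distances are linearly
dependent in ℝ². -/
theorem prod_triangle_equality {X₁ X₂ : Type*} [MetricSpace X₁] [MetricSpace X₂]
    (a b c : WithLp 2 (X₁ × X₂))
    (h : dist a c = dist a b + dist b c) :
    dist ((WithLp.equiv 2 (X₁ × X₂)) a).1 ((WithLp.equiv 2 (X₁ × X₂)) c).1 =
        dist ((WithLp.equiv 2 (X₁ × X₂)) a).1 ((WithLp.equiv 2 (X₁ × X₂)) b).1 +
          dist ((WithLp.equiv 2 (X₁ × X₂)) b).1 ((WithLp.equiv 2 (X₁ × X₂)) c).1 ∧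
    dist ((WithLp.equiv 2 (X₁ × X₂)) a).2 ((WithLp.equiv 2 (X₁ × X₂)) c).2 =
        dist ((WithLp.equiv 2 (X₁ × X₂)) a).2 ((WithLp.equiv 2 (X₁ × X₂)) b).2 +
          dist ((WithLp.equiv 2 (X₁ × X₂)) b).2 ((WithLp.equiv 2 (X₁ × X₂)) c).2 ∧
    ¬ LinearIndependent ℝ
        (![(dist ((WithLp.equiv 2 (X₁ × X₂)) a).1 ((WithLp.equiv 2 (X₁ × X₂)) b).1,
            dist ((WithLp.equiv 2 (X₁ × X₂)) a).2 ((WithLp.equiv 2 (X₁ × X₂)) b).2),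
           (dist ((WithLp.equiv 2 (X₁ × X₂)) a).1 ((WithLp.equiv 2 (X₁ × X₂)) c).1,
            dist ((WithLp.equiv 2 (X₁ × X₂)) a).2 ((WithLp.equiv 2 (X₁ × X₂)) c).2)] :
          Fin 2 → ℝ × ℝ) := by
  have hp : 0 < (2 : ℝ≥0∞).toReal := by norm_num
  have hd : ∀ x y : WithLp 2 (X₁ × X₂),
      dist x y = Real.sqrt (dist x.fst y.fst ^ 2 + dist x.snd y.snd ^ 2) := by
    intro x y
    rw [WithLp.prod_dist_eq_add hp, Real.sqrt_eq_rpow]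
    norm_num
  rw [hd, hd, hd] at h
  obtain ⟨e1, e2, hcr⟩ := key_real _ _ _ _ _ _ dist_nonneg dist_nonneg dist_nonneg
    dist_nonneg dist_nonneg dist_nonneg (dist_triangle _ _ _) (dist_triangle _ _ _) h
  refine ⟨e1, e2, ?_⟩
  intro hli
  set P1 := dist ((WithLp.equiv 2 (X₁ × X₂)) a).1 ((WithLp.equiv 2 (X₁ × X₂)) b).1 with hP1
  set P2 := dist ((WithLp.equiv 2 (X₁ × X₂)) a).2 ((WithLp.equiv 2 (X₁ × X₂)) b).2 with hP2
  set R1 := dist ((WithLp.equiv 2 (X₁ × X₂)) a).1 ((WithLp.equiv 2 (X₁ × X₂)) c).1 with hR1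
  set R2 := dist ((WithLp.equiv 2 (X₁ × X₂)) a).2 ((WithLp.equiv 2 (X₁ × X₂)) c).2 with hR2
  have hcr' : P1 * R2 = P2 * R1 := hcr
  by_cases h0 : P1 = 0 ∧ P2 = 0
  · exact hli.ne_zero 0 (by simp [h0.1, h0.2, Prod.ext_iff])
  · have := Fintype.linearIndependent_iff.mp hli ![R1 + R2, -(P1 + P2)] ?_ 1
    · have hP1n : 0 ≤ P1 := dist_nonneg
      have hP2n : 0 ≤ P2 := dist_nonneg
      have hz : -(P1 + P2) = 0 := by simpa using this
      exact h0 ⟨by linarith, by linarith⟩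
    · simp only [Fin.sum_univ_two, Matrix.cons_val_zero, Matrix.cons_val_one, Matrix.head_cons]
      apply Prod.ext
      · simp only [Prod.smul_fst, Prod.fst_add, smul_eq_mul, Prod.fst_zero]
        linear_combination hcr'
      · simp only [Prod.smul_snd, Prod.snd_add, smul_eq_mul, Prod.snd_zero]
        linear_combination -hcr'
end

section
/- Let X be a metric space and let ℓ₁, ℓ₂ be lines in X. Then ℓ₁ and ℓ₂ are parallel if and only if there exist constant-speed geodesics γ₁, γ₂ : ℝ → X with images ℓ₁ and ℓ₂ respectively, and real constants A, B, C, such that d(γ₁(s), γ₂(t))² = A·(s−t)² + B·(s−t) + C for all s, t ∈ ℝ, i.e. d² is a quadratic function of (s−t). (Kleiner–Lott, 'Locally Collapsed 3-Manifolds', Sublemma 4.4, part (2).) -/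
/-- A map `γ : ℝ → X` into a metric space is a constant-speed geodesic if there
is `c ≥ 0` with `dist (γ s) (γ t) = c * |s - t|` for all `s t`. -/
def IsConstSpeedGeodesic {X : Type*} [MetricSpace X] (γ : ℝ → X) : Prop :=
  ∃ c : ℝ, 0 ≤ c ∧ ∀ s t : ℝ, dist (γ s) (γ t) = c * |s - t|

/-- A line in a metric space: the image of an isometric embedding of `ℝ`. -/
def IsLine {X : Type*} [MetricSpace X] (L : Set X) : Prop :=
  ∃ γ : ℝ → X, (∀ s t : ℝ, dist (γ s) (γ t) = |s - t|) ∧ Set.range γ = L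

/-- Two lines `L₁`, `L₂` in a metric space are parallel if there is a
distance-preserving bijection of `L₁ ∪ L₂` onto the union of two parallel
lines `ℝ × {0}` and `ℝ × {a}` in the Euclidean plane, carrying `L₁` onto
`ℝ × {0}` and `L₂` onto `ℝ × {a}`. -/
def AreParallelLines {X : Type*} [MetricSpace X] (L₁ L₂ : Set X) : Prop :=
  ∃ a : ℝ, 0 ≤ a ∧ ∃ f : X → WithLp 2 (ℝ × ℝ),
    (∀ x ∈ L₁ ∪ L₂, ∀ y ∈ L₁ ∪ L₂, dist (f x) (f y) = dist x y) ∧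
    f '' L₁ = {p : WithLp 2 (ℝ × ℝ) | ((WithLp.equiv 2 (ℝ × ℝ)) p).2 = 0} ∧
    f '' L₂ = {p : WithLp 2 (ℝ × ℝ) | ((WithLp.equiv 2 (ℝ × ℝ)) p).2 = a}

/-!
Given the isometry onto the two horizontal lines at heights `0` and `a`, pull back the
parametrizations `s ↦ (s, 0)` and `t ↦ (t, a)`: the squared distance is `(s - t)² + a²`.

Conversely, by the triangle inequality `d(γ₁ 0, γ₂ t)` grows like `c₂ |t|` and `d(γ₁ s, γ₂ 0)`
like `c₁ |s|`, so the leading coefficient is `A = c₁² = c₂²`; the speed `c` is nonzero as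
`L₁` is a line. Completing the square, `d² = (c (s - t) + B / (2c))² + a²` with
`a² = C - B² / (4c²) ≥ 0`, which is the squared distance from `(c s, 0)` to
`(c t - B / (2c), a)` in the plane. All distances between points of the two lines thus agree with
those of their planar counterparts, so sending each point to its counterpart is a well-defined
isometry.
-/

open Set

lemma eq_zero_of_abs_mul_sq_le_linear {p u v : ℝ}
    (h : ∀ t : ℝ, 0 ≤ t → |p| * t ^ 2 ≤ u * t + v) : p = 0 := by
  by_contra hp
  have hp' : 0 < |p| := abs_pos.2 hp
  set t := (|u| + |v| + 1) / |p| + 1 with ht_def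
  have ht : 1 ≤ t := by
    have : 0 ≤ (|u| + |v| + 1) / |p| := by positivity
    linarith
  have hpt : |p| * t = |u| + |v| + 1 + |p| := by
    rw [ht_def]; field_simp
  nlinarith [h t (by linarith), le_abs_self u, le_abs_self v, abs_nonneg u, abs_nonneg v]

lemma Set.InjOn.exists_range_eq_comp_eq {Z X Y : Type*} {f : X → Y} {L : Set X}
    (hf : InjOn f L) {ψ : Z → Y} (h : f '' L = range ψ) :
    ∃ γ : Z → X, range γ = L ∧ f ∘ γ = ψ := by
  have : ∀ z, ∃ x ∈ L, f x = ψ z := fun z => by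
    rw [← mem_image, h]
    exact mem_range_self z
  choose γ hγL hγ using this
  refine ⟨γ, (range_subset_iff.2 hγL).antisymm fun x hx => ?_, funext hγ⟩
  obtain ⟨z, hz⟩ : f x ∈ range ψ := h ▸ mem_image_of_mem f hx
  exact ⟨z, hf (hγL z) hx ((hγ z).trans hz)⟩

lemma exists_comp_eq_of_dist_eq {Z X Y : Type*} [Nonempty Z] [PseudoMetricSpace X]
    [MetricSpace Y] {δ : Z → X} {φ : Z → Y} (h : ∀ z w, dist (φ z) (φ w) = dist (δ z) (δ w)) :
    ∃ f : X → Y, f ∘ δ = φ :=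
  ⟨φ ∘ Function.invFun δ, funext fun z => dist_eq_zero.1 <| by
    rw [Function.comp_apply, Function.comp_apply, h, Function.invFun_eq (f := δ) ⟨z, rfl⟩,
      dist_self]⟩

lemma dist_toLp_sq (x y : ℝ × ℝ) :
    dist (WithLp.toLp 2 x) (WithLp.toLp 2 y) ^ 2 = (x.1 - y.1) ^ 2 + (x.2 - y.2) ^ 2 := by
  rw [WithLp.prod_dist_eq_of_L2, Real.sq_sqrt (by positivity), Real.dist_eq, Real.dist_eq,
    sq_abs, sq_abs, WithLp.toLp_fst, WithLp.toLp_fst, WithLp.toLp_snd, WithLp.toLp_snd]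

lemma range_toLp_mk_snd {g : ℝ → ℝ} (hg : Function.Surjective g) (a : ℝ) :
    range (fun s => WithLp.toLp 2 (g s, a)) = {p | (WithLp.equiv 2 (ℝ × ℝ) p).2 = a} := by
  ext p
  refine ⟨?_, fun hp => ?_⟩
  · rintro ⟨s, rfl⟩
    rfl
  · obtain ⟨s, hs⟩ := hg p.fst
    exact ⟨s, WithLp.ofLp_injective 2 (Prod.ext hs hp.symm)⟩

section MetricSpace

variable {X : Type*} [MetricSpace X]

lemma IsLine.ne_zero_of_dist_eq_mul {L : Set X} (hL : IsLine L) {γ : ℝ → X} {c : ℝ}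
    (hγ : ∀ s t, dist (γ s) (γ t) = c * |s - t|) (hγL : range γ = L) : c ≠ 0 := by
  rintro rfl
  obtain ⟨η, hη, rfl⟩ := hL
  obtain ⟨s₀, hs₀⟩ : η 0 ∈ range γ := hγL ▸ mem_range_self 0
  obtain ⟨s₁, hs₁⟩ : η 1 ∈ range γ := hγL ▸ mem_range_self 1
  have := hη 0 1
  rw [← hs₀, ← hs₁, hγ] at this
  norm_num at this

lemma sq_speed_eq_of_dist_sq_eq_quadratic {γ : ℝ → X} {c : ℝ} (hc : 0 ≤ c)
    (hγ : ∀ s t, dist (γ s) (γ t) = c * |s - t|) (x : X) {A B C : ℝ}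
    (h : ∀ t, dist x (γ t) ^ 2 = A * t ^ 2 + B * t + C) : A = c ^ 2 := by
  set d := dist x (γ 0)
  rw [← sub_eq_zero]
  refine eq_zero_of_abs_mul_sq_le_linear (u := 2 * c * d + |B|) (v := d ^ 2 + |C|) fun t ht => ?_
  have hfar : |dist x (γ t) - c * t| ≤ d := by
    have := abs_dist_sub_le x (γ 0) (γ t)
    rwa [hγ, zero_sub, abs_neg, abs_of_nonneg ht] at this
  have hsq : (A - c ^ 2) * t ^ 2
      = (dist x (γ t) - c * t) * (dist x (γ t) - c * t + 2 * c * t) - (B * t + C) := by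
    linear_combination (-1 : ℝ) * h t
  have hBC : |B * t + C| ≤ |B| * t + |C| := by
    simpa only [abs_mul, abs_of_nonneg ht] using abs_add_le (B * t) C
  have hnear : |dist x (γ t) - c * t + 2 * c * t| ≤ d + 2 * c * t := by
    have := (abs_add_le _ (2 * c * t)).trans (add_le_add_left hfar _)
    rwa [abs_of_nonneg (by positivity : 0 ≤ 2 * c * t)] at this
  calc |A - c ^ 2| * t ^ 2 = |(A - c ^ 2) * t ^ 2| := by rw [abs_mul, abs_of_nonneg (sq_nonneg t)]
    _ ≤ |dist x (γ t) - c * t| * |dist x (γ t) - c * t + 2 * c * t| + |B * t + C| := by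
      rw [hsq, ← abs_mul]; exact abs_sub _ _
    _ ≤ d * (d + 2 * c * t) + (|B| * t + |C|) := by gcongr
    _ = (2 * c * d + |B|) * t + (d ^ 2 + |C|) := by ring

lemma areParallelLines_range_of_dist_eq {γ₁ γ₂ : ℝ → X} {φ₁ φ₂ : ℝ → WithLp 2 (ℝ × ℝ)}
    {a : ℝ} (ha : 0 ≤ a) (hφ₁ : range φ₁ = {p | (WithLp.equiv 2 (ℝ × ℝ) p).2 = 0})
    (hφ₂ : range φ₂ = {p | (WithLp.equiv 2 (ℝ × ℝ) p).2 = a})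
    (h : ∀ z w, dist (Sum.elim φ₁ φ₂ z) (Sum.elim φ₁ φ₂ w)
      = dist (Sum.elim γ₁ γ₂ z) (Sum.elim γ₁ γ₂ w)) :
    AreParallelLines (range γ₁) (range γ₂) := by
  obtain ⟨f, hf⟩ := exists_comp_eq_of_dist_eq h
  refine ⟨a, ha, f, ?_, ?_, ?_⟩
  · rw [← Set.Sum.elim_range]
    rintro _ ⟨z, rfl⟩ _ ⟨w, rfl⟩
    rw [← h, ← hf, Function.comp_apply, Function.comp_apply]
  · rw [← hφ₁, ← range_comp, ← Sum.elim_comp_inl γ₁ γ₂, ← Function.comp_assoc, hf,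
      Sum.elim_comp_inl]
  · rw [← hφ₂, ← range_comp, ← Sum.elim_comp_inr γ₁ γ₂, ← Function.comp_assoc, hf,
      Sum.elim_comp_inr]

lemma AreParallelLines.exists_dist_sq_eq {L₁ L₂ : Set X} (h : AreParallelLines L₁ L₂) :
    ∃ γ₁ γ₂ : ℝ → X, ∃ a : ℝ, (∀ s t, dist (γ₁ s) (γ₁ t) = |s - t|) ∧
      (∀ s t, dist (γ₂ s) (γ₂ t) = |s - t|) ∧ range γ₁ = L₁ ∧ range γ₂ = L₂ ∧
      ∀ s t, dist (γ₁ s) (γ₂ t) ^ 2 = (s - t) ^ 2 + a ^ 2 := by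
  obtain ⟨a, -, f, hf, hf₁, hf₂⟩ := h
  have hinj : InjOn f (L₁ ∪ L₂) := fun x hx y hy hxy =>
    dist_eq_zero.1 (by rw [← hf x hx y hy, hxy, dist_self])
  have hline (b : ℝ) := range_toLp_mk_snd (g := fun s => s) Function.surjective_id b
  obtain ⟨γ₁, rfl, hγ₁⟩ :=
    (hinj.mono subset_union_left).exists_range_eq_comp_eq (hf₁.trans (hline 0).symm)
  obtain ⟨γ₂, rfl, hγ₂⟩ :=
    (hinj.mono subset_union_right).exists_range_eq_comp_eq (hf₂.trans (hline a).symm)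
  have e₁ : ∀ s, f (γ₁ s) = WithLp.toLp 2 (s, 0) := congrFun hγ₁
  have e₂ : ∀ t, f (γ₂ t) = WithLp.toLp 2 (t, a) := congrFun hγ₂
  have mem₁ : ∀ s, γ₁ s ∈ range γ₁ ∪ range γ₂ := fun s => .inl ⟨s, rfl⟩
  have mem₂ : ∀ t, γ₂ t ∈ range γ₁ ∪ range γ₂ := fun t => .inr ⟨t, rfl⟩
  refine ⟨γ₁, γ₂, a, fun s t => ?_, fun s t => ?_, rfl, rfl, fun s t => ?_⟩
  · rw [← hf _ (mem₁ s) _ (mem₁ t), e₁, e₁,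
      ← pow_left_inj₀ dist_nonneg (abs_nonneg _) two_ne_zero, dist_toLp_sq, sq_abs]
    ring
  · rw [← hf _ (mem₂ s) _ (mem₂ t), e₂, e₂,
      ← pow_left_inj₀ dist_nonneg (abs_nonneg _) two_ne_zero, dist_toLp_sq, sq_abs]
    ring
  · rw [← hf _ (mem₁ s) _ (mem₂ t), e₁, e₂, dist_toLp_sq]
    ring

lemma areParallelLines_range_of_dist_sq_eq_quadratic {γ₁ γ₂ : ℝ → X} {c B C : ℝ} (hc : c ≠ 0)
    (hγ₁ : ∀ s t, dist (γ₁ s) (γ₁ t) = c * |s - t|)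
    (hγ₂ : ∀ s t, dist (γ₂ s) (γ₂ t) = c * |s - t|)
    (h : ∀ s t, dist (γ₁ s) (γ₂ t) ^ 2 = c ^ 2 * (s - t) ^ 2 + B * (s - t) + C) :
    AreParallelLines (range γ₁) (range γ₂) := by
  have hdiscrim : discrim (c ^ 2) B C ≤ 0 :=
    discrim_le_zero fun s => by simpa [sq] using (h s 0).symm.trans_ge (sq_nonneg _)
  have hK : 0 ≤ C - B ^ 2 / (4 * c ^ 2) := by
    rw [discrim] at hdiscrim
    rw [sub_nonneg, div_le_iff₀ (by positivity)]
    linarith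
  set a := √(C - B ^ 2 / (4 * c ^ 2))
  have ha : a ^ 2 = C - B ^ 2 / (4 * c ^ 2) := Real.sq_sqrt hK
  refine areParallelLines_range_of_dist_eq (a := a) (φ₁ := fun s => WithLp.toLp 2 (c * s, 0))
    (φ₂ := fun t => WithLp.toLp 2 (c * t - B / (2 * c), a)) (Real.sqrt_nonneg _)
    (range_toLp_mk_snd (mul_left_surjective₀ hc) 0)
    (range_toLp_mk_snd (fun u => ⟨(u + B / (2 * c)) / c, by field_simp; ring⟩) a) ?_
  · rintro (s | s) (t | t) <;>
      simp only [Sum.elim_inl, Sum.elim_inr] <;>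
      rw [← pow_left_inj₀ dist_nonneg dist_nonneg two_ne_zero, dist_toLp_sq]
    · rw [hγ₁, mul_pow, sq_abs]; ring
    · rw [h, zero_sub, neg_sq, ha]; field_simp; ring
    · rw [dist_comm, h, sub_zero, ha]; field_simp; ring
    · rw [hγ₂, mul_pow, sq_abs]; ring

end MetricSpace

theorem areParallelLines_iff_quadratic_general {X : Type*} [MetricSpace X]
    (L₁ L₂ : Set X) (h₁ : IsLine L₁) :
    AreParallelLines L₁ L₂ ↔
      ∃ γ₁ γ₂ : ℝ → X, IsConstSpeedGeodesic γ₁ ∧ IsConstSpeedGeodesic γ₂ ∧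
        Set.range γ₁ = L₁ ∧ Set.range γ₂ = L₂ ∧
        ∃ A B C : ℝ, ∀ s t : ℝ,
          dist (γ₁ s) (γ₂ t) ^ 2 = A * (s - t) ^ 2 + B * (s - t) + C := by
  constructor
  · intro h
    obtain ⟨γ₁, γ₂, a, hγ₁, hγ₂, hr₁, hr₂, hd⟩ := h.exists_dist_sq_eq
    exact ⟨γ₁, γ₂, ⟨1, zero_le_one, by simpa using hγ₁⟩, ⟨1, zero_le_one, by simpa using hγ₂⟩,
      hr₁, hr₂, 1, 0, a ^ 2, by simpa using hd⟩
  · rintro ⟨γ₁, γ₂, ⟨c₁, hc₁, hγ₁⟩, ⟨c₂, hc₂, hγ₂⟩, rfl, rfl, A, B, C, hQ⟩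
    have hA₁ : A = c₁ ^ 2 :=
      sq_speed_eq_of_dist_sq_eq_quadratic hc₁ hγ₁ (γ₂ 0) (A := A) (B := B) (C := C)
        fun s => by rw [dist_comm, hQ]; ring
    have hA₂ : A = c₂ ^ 2 :=
      sq_speed_eq_of_dist_sq_eq_quadratic hc₂ hγ₂ (γ₁ 0) (A := A) (B := -B) (C := C)
        fun t => by rw [hQ]; ring
    obtain rfl : c₂ = c₁ := (pow_left_inj₀ hc₂ hc₁ two_ne_zero).1 (hA₂.symm.trans hA₁)
    subst hA₁
    exact areParallelLines_range_of_dist_sq_eq_quadratic (h₁.ne_zero_of_dist_eq_mul hγ₁ rfl)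
      hγ₁ hγ₂ hQ

/-- Kleiner–Lott, "Locally Collapsed 3-Manifolds", Sublemma 4.4(2): two lines in
a metric space are parallel iff they admit constant-speed parametrizations
`γ₁, γ₂` such that `dist (γ₁ s) (γ₂ t) ^ 2` is a quadratic function of `s - t`. -/
theorem areParallelLines_iff_quadratic {X : Type*} [MetricSpace X]
    (L₁ L₂ : Set X) (h₁ : IsLine L₁) (h₂ : IsLine L₂) :
    AreParallelLines L₁ L₂ ↔
      ∃ γ₁ γ₂ : ℝ → X, IsConstSpeedGeodesic γ₁ ∧ IsConstSpeedGeodesic γ₂ ∧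
        Set.range γ₁ = L₁ ∧ Set.range γ₂ = L₂ ∧
        ∃ A B C : ℝ, ∀ s t : ℝ,
          dist (γ₁ s) (γ₂ t) ^ 2 = A * (s - t) ^ 2 + B * (s - t) + C :=
  areParallelLines_iff_quadratic_general L₁ L₂ h₁
end

section
/- Let X be a metric space, let k ∈ ℕ, and let ℓ₁, ℓ₂ be parallel lines in the ℓ²-product ℝᵏ ×₂ X, where ℝᵏ = EuclideanSpace ℝ (Fin k). Let π_X : ℝᵏ ×₂ X → X denote the projection onto the second factor. Then either π_X(ℓ₁) and π_X(ℓ₂) are both single points, or π_X(ℓ₁) and π_X(ℓ₂) are both lines in X and these lines are parallel. (Kleiner–Lott, 'Locally Collapsed 3-Manifolds', Sublemma 4.4, part (3).) -/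
open Set
open scoped RealInnerProductSpace

/-- Equality case of the triangle inequality for `(a₁, b₁) + (a₂, b₂)` in the Euclidean plane,
where `dᵢ` are the lengths and `(A, B)` is a vector dominated by the sum. -/
lemma add_eq_and_mul_eq_of_sq_add_sq_eq {a₁ a₂ b₁ b₂ A B d₁ d₂ : ℝ} (hb₁ : 0 ≤ b₁)
    (hb₂ : 0 ≤ b₂) (hA : 0 ≤ A) (hB : 0 ≤ B) (hd₁ : 0 ≤ d₁) (hd₂ : 0 ≤ d₂)
    (h₁ : a₁ ^ 2 + b₁ ^ 2 = d₁ ^ 2) (h₂ : a₂ ^ 2 + b₂ ^ 2 = d₂ ^ 2)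
    (h : A ^ 2 + B ^ 2 = (d₁ + d₂) ^ 2) (hA_le : A ≤ a₁ + a₂) (hB_le : B ≤ b₁ + b₂) :
    B = b₁ + b₂ ∧ b₁ * d₂ = b₂ * d₁ := by
  have lagrange : (a₁ * a₂ + b₁ * b₂) ^ 2 + (a₁ * b₂ - a₂ * b₁) ^ 2 = (d₁ * d₂) ^ 2 := by
    rw [mul_pow, ← h₁, ← h₂]; ring
  have hcs : a₁ * a₂ + b₁ * b₂ ≤ d₁ * d₂ :=
    (abs_le_of_sq_le_sq' (by nlinarith) (mul_nonneg hd₁ hd₂)).2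
  have hA_sq : A ^ 2 ≤ (a₁ + a₂) ^ 2 := pow_le_pow_left₀ hA hA_le 2
  have hB_sq : (b₁ + b₂) ^ 2 ≤ B ^ 2 := by nlinarith [pow_le_pow_left₀ hB hB_le 2]
  have hB_eq : B = b₁ + b₂ := le_antisymm hB_le (abs_le_of_sq_le_sq' hB_sq hB).2
  have hcs_eq : a₁ * a₂ + b₁ * b₂ = d₁ * d₂ := by nlinarith
  have hcollinear : a₁ * b₂ = a₂ * b₁ := by
    rw [hcs_eq] at lagrange
    exact sub_eq_zero.1 (pow_eq_zero_iff two_ne_zero |>.1 (by linarith))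
  refine ⟨hB_eq, (sq_eq_sq₀ (mul_nonneg hb₁ hd₂) (mul_nonneg hb₂ hd₁)).1 ?_⟩
  linear_combination b₂ ^ 2 * h₁ - b₁ ^ 2 * h₂ - (a₁ * b₂ + a₂ * b₁) * hcollinear

lemma eq_of_forall_subinterval_eq {r : ℝ → ℝ → ℝ}
    (h : ∀ x y z, x < y → y < z → r x y = r x z ∧ r y z = r x z) {s t : ℝ} (hst : s < t) :
    r s t = r 0 1 := by
  have hm₁ : min s 0 - 1 < s := by linarith [min_le_left s 0]
  have hm₂ : min s 0 - 1 < 0 := by linarith [min_le_right s 0]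
  have hM₁ : t < max t 1 + 1 := by linarith [le_max_left t 1]
  have hM₂ : 1 < max t 1 + 1 := by linarith [le_max_right t 1]
  calc r s t = r s (max t 1 + 1) := (h _ _ _ hst hM₁).1
    _ = r (min s 0 - 1) (max t 1 + 1) := (h _ _ _ hm₁ (hst.trans hM₁)).2
    _ = r 0 (max t 1 + 1) := (h _ _ _ hm₂ (one_pos.trans hM₂)).2.symm
    _ = r 0 1 := (h _ _ _ one_pos hM₂).1.symm

lemma nonneg_of_forall_quadratic_nonneg {a b c : ℝ} (h : ∀ x, 0 ≤ a * x ^ 2 + b * x + c) :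
    0 ≤ a := by
  have hdisc := discrim_le_zero fun x => by simpa only [sq] using h x
  rw [discrim] at hdisc
  nlinarith [h 0, h 1, h (-1), sq_nonneg b]

lemma sq_le_mul_of_forall_quadratic_nonneg {A B C D E F : ℝ}
    (h : ∀ s t, 0 ≤ A * s ^ 2 + 2 * C * s * t + B * t ^ 2 + D * s + E * t + F) :
    C ^ 2 ≤ A * B := by
  have hdiag : ∀ σ, 0 ≤ A * σ ^ 2 + 2 * C * σ + B := fun σ =>
    nonneg_of_forall_quadratic_nonneg (b := D * σ + E) (c := F) fun x => by
      linear_combination h (σ * x) x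
  have hdisc := discrim_le_zero fun σ => by simpa only [sq] using hdiag σ
  rw [discrim] at hdisc
  linarith

namespace WithLp

lemma prod_dist_sq_eq_of_L2 {α β : Type*} [PseudoMetricSpace α] [PseudoMetricSpace β]
    (x y : WithLp 2 (α × β)) : dist x y ^ 2 = dist x.fst y.fst ^ 2 + dist x.snd y.snd ^ 2 := by
  rw [prod_dist_eq_add (by norm_num), ENNReal.toReal_ofNat, ← Real.rpow_natCast,
    ← Real.rpow_mul (by positivity)]
  norm_num

end WithLp

lemma exists_dist_snd_eq_mul_abs_sub {α β : Type*} [PseudoMetricSpace α] [PseudoMetricSpace β]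
    {γ : ℝ → WithLp 2 (α × β)} (hγ : ∀ s t, dist (γ s) (γ t) = |s - t|) :
    ∃ c, 0 ≤ c ∧ ∀ s t, dist (γ s).snd (γ t).snd = c * |s - t| := by
  set b : ℝ → ℝ → ℝ := fun s t => dist (γ s).snd (γ t).snd
  have hsq : ∀ s t, s ≤ t → dist (γ s).fst (γ t).fst ^ 2 + b s t ^ 2 = (t - s) ^ 2 :=
    fun s t hst => by
      rw [← WithLp.prod_dist_sq_eq_of_L2, hγ, abs_of_nonpos (by linarith)]; ring
  have hsplit : ∀ x y z, x ≤ y → y ≤ z →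
      b x z = b x y + b y z ∧ b x y * (z - y) = b y z * (y - x) := fun x y z hxy hyz =>
      add_eq_and_mul_eq_of_sq_add_sq_eq dist_nonneg dist_nonneg dist_nonneg dist_nonneg
        (sub_nonneg.2 hxy) (sub_nonneg.2 hyz) (hsq x y hxy) (hsq y z hyz)
        (by rw [hsq x z (hxy.trans hyz)]; ring) (dist_triangle _ _ _) (dist_triangle _ _ _)
  have hlin : ∀ s t, s < t → b s t = b 0 1 * (t - s) := by
    intro s t hst
    have hslope : b s t / (t - s) = b 0 1 / (1 - 0) :=
      eq_of_forall_subinterval_eq (r := fun x y => b x y / (y - x)) (fun x y z hxy hyz => by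
        obtain ⟨hadd, hprop⟩ := hsplit x y z hxy.le hyz.le
        rw [div_eq_div_iff (sub_pos.2 hxy).ne' (sub_pos.2 (hxy.trans hyz)).ne',
          div_eq_div_iff (sub_pos.2 hyz).ne' (sub_pos.2 (hxy.trans hyz)).ne', hadd]
        exact ⟨by linear_combination hprop, by linear_combination -hprop⟩) hst
    simp only [sub_zero, div_one] at hslope
    rw [← hslope, div_mul_cancel₀ _ (sub_pos.2 hst).ne']
  refine ⟨b 0 1, dist_nonneg, fun s t => ?_⟩
  rcases lt_trichotomy s t with hst | rfl | hst
  · show b s t = _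
    rw [hlin s t hst, abs_of_neg (sub_neg.2 hst), neg_sub]
  · simp [b]
  · show b s t = _
    rw [show b s t = b t s from dist_comm _ _, hlin t s hst, abs_of_pos (sub_pos.2 hst)]

section InnerProductSpace

variable {E : Type*} [NormedAddCommGroup E] [InnerProductSpace ℝ E]

lemma eq_add_smul_of_norm_sub_sq_eq {f : ℝ → E} {κ : ℝ}
    (hf : ∀ s t, ‖f s - f t‖ ^ 2 = κ * (s - t) ^ 2) (t : ℝ) :
    f t = f 0 + t • (f 1 - f 0) := by
  have hv : ‖f t - f 0‖ ^ 2 = κ * t ^ 2 := by simpa using hf t 0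
  have hu : ‖f 1 - f 0‖ ^ 2 = κ := by simpa using hf 1 0
  have hinner : ⟪f t - f 0, f 1 - f 0⟫ = κ * t := by
    have hvu := hf t 1
    rw [← sub_sub_sub_cancel_right _ _ (f 0), norm_sub_sq_real, hv, hu] at hvu
    linear_combination -hvu / 2
  have hzero : ‖(f t - f 0) - t • (f 1 - f 0)‖ ^ 2 = 0 := by
    rw [norm_sub_sq_real, inner_smul_right, hinner, norm_smul, mul_pow, Real.norm_eq_abs, sq_abs,
      hu, hv]
    ring
  rw [← sub_eq_zero, ← norm_eq_zero, ← sub_sub]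
  exact pow_eq_zero_iff two_ne_zero |>.1 hzero

lemma exists_fst_eq_add_smul_and_dist_snd_eq {X : Type*} [PseudoMetricSpace X]
    {γ : ℝ → WithLp 2 (E × X)} (hγ : ∀ s t, dist (γ s) (γ t) = |s - t|) :
    ∃ β u, 0 ≤ β ∧ ‖u‖ ^ 2 = 1 - β ^ 2 ∧ (∀ t, (γ t).fst = (γ 0).fst + t • u) ∧
      ∀ s t, dist (γ s).snd (γ t).snd = β * |s - t| := by
  obtain ⟨β, hβ, hsnd⟩ := exists_dist_snd_eq_mul_abs_sub hγ
  have hfst : ∀ s t, ‖(γ s).fst - (γ t).fst‖ ^ 2 = (1 - β ^ 2) * (s - t) ^ 2 := fun s t => by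
    have := WithLp.prod_dist_sq_eq_of_L2 (γ s) (γ t)
    rw [hγ, hsnd, sq_abs, dist_eq_norm, mul_pow, sq_abs] at this
    linear_combination -this
  exact ⟨β, _, hβ, by simpa using hfst 1 0, eq_add_smul_of_norm_sub_sq_eq hfst, hsnd⟩

lemma norm_add_smul_sub_smul_sq (w u₁ u₂ : E) (s t : ℝ) :
    ‖w + s • u₁ - t • u₂‖ ^ 2 = ‖w‖ ^ 2 + s ^ 2 * ‖u₁‖ ^ 2 + t ^ 2 * ‖u₂‖ ^ 2
      + 2 * s * ⟪w, u₁⟫ - 2 * t * ⟪w, u₂⟫ - 2 * s * t * ⟪u₁, u₂⟫ := by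
  simp only [norm_sub_sq_real, norm_add_sq_real, real_inner_smul_left, real_inner_smul_right,
    inner_add_left, norm_smul, Real.norm_eq_abs, mul_pow, sq_abs]
  ring

lemma eq_and_eq_of_forall_norm_add_smul_sub_smul_sq_le {β₁ β₂ a : ℝ} {u₁ u₂ w : E}
    (hβ₁ : 0 ≤ β₁) (hβ₂ : 0 ≤ β₂) (hu₁ : ‖u₁‖ ^ 2 = 1 - β₁ ^ 2) (hu₂ : ‖u₂‖ ^ 2 = 1 - β₂ ^ 2)
    (h : ∀ s t : ℝ, ‖w + s • u₁ - t • u₂‖ ^ 2 ≤ (s - t) ^ 2 + a ^ 2) : β₁ = β₂ ∧ u₁ = u₂ := by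
  have hform : (⟪u₁, u₂⟫ - 1) ^ 2 ≤ β₁ ^ 2 * β₂ ^ 2 :=
    sq_le_mul_of_forall_quadratic_nonneg (D := -2 * ⟪w, u₁⟫) (E := 2 * ⟪w, u₂⟫)
      (F := a ^ 2 - ‖w‖ ^ 2) fun s t => by
        have := h s t
        rw [norm_add_smul_sub_smul_sq, hu₁, hu₂] at this
        linear_combination this
  have hinner : 1 - β₁ * β₂ ≤ ⟪u₁, u₂⟫ := by
    have := (abs_le_of_sq_le_sq' (a := ⟪u₁, u₂⟫ - 1) (by rwa [mul_pow])
      (mul_nonneg hβ₁ hβ₂)).1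
    linarith
  have hsum : ‖u₁ - u₂‖ ^ 2 + (β₁ - β₂) ^ 2 ≤ 0 := by
    rw [norm_sub_sq_real, hu₁, hu₂]
    linear_combination 2 * hinner
  have hβ : (β₁ - β₂) ^ 2 = 0 := le_antisymm (by nlinarith [sq_nonneg ‖u₁ - u₂‖]) (sq_nonneg _)
  have hu : ‖u₁ - u₂‖ ^ 2 = 0 := le_antisymm (by nlinarith [sq_nonneg (β₁ - β₂)]) (sq_nonneg _)
  exact ⟨sub_eq_zero.1 (pow_eq_zero_iff two_ne_zero |>.1 hβ),
    sub_eq_zero.1 (norm_eq_zero.1 (pow_eq_zero_iff two_ne_zero |>.1 hu))⟩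

end InnerProductSpace

section ParallelPair

variable {X : Type*}

def IsParallelPair [PseudoMetricSpace X] (a : ℝ) (γ₁ γ₂ : ℝ → X) : Prop :=
  (∀ s t, dist (γ₁ s) (γ₁ t) = |s - t|) ∧ (∀ s t, dist (γ₂ s) (γ₂ t) = |s - t|) ∧
    ∀ s t, dist (γ₁ s) (γ₂ t) ^ 2 = (s - t) ^ 2 + a ^ 2

def parallelLinesParam (a : ℝ) : ℝ ⊕ ℝ → WithLp 2 (ℝ × ℝ) :=
  Sum.elim (fun s => WithLp.toLp 2 (s, 0)) (fun t => WithLp.toLp 2 (t, a))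

lemma range_toLp_mk (c : ℝ) : range (fun s : ℝ => WithLp.toLp 2 (s, c)) =
    {p : WithLp 2 (ℝ × ℝ) | (WithLp.equiv 2 (ℝ × ℝ) p).2 = c} := by
  ext p
  refine ⟨by rintro ⟨s, rfl⟩; rfl, fun hp => ⟨p.fst, ?_⟩⟩
  rw [← hp]
  rfl

lemma dist_toLp_mk_mk (s t c d : ℝ) :
    dist (WithLp.toLp 2 (s, c)) (WithLp.toLp 2 (t, d)) = √((s - t) ^ 2 + (c - d) ^ 2) := by
  rw [WithLp.prod_dist_eq_of_L2]
  simp [Real.dist_eq, sq_abs]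

lemma isParallelPair_iff_dist_sumElim [PseudoMetricSpace X] {a : ℝ} {γ₁ γ₂ : ℝ → X} :
    IsParallelPair a γ₁ γ₂ ↔ ∀ x y, dist (Sum.elim γ₁ γ₂ x) (Sum.elim γ₁ γ₂ y) =
      dist (parallelLinesParam a x) (parallelLinesParam a y) := by
  simp only [Sum.forall, Sum.elim_inl, Sum.elim_inr, parallelLinesParam, dist_toLp_mk_mk,
    sub_self, ne_eq, OfNat.ofNat_ne_zero, not_false_eq_true, zero_pow, add_zero,
    Real.sqrt_sq_eq_abs]
  constructor
  · rintro ⟨h₁, h₂, h₁₂⟩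
    refine ⟨fun s => ⟨h₁ s, fun t => ?_⟩, fun s => ⟨fun t => ?_, h₂ s⟩⟩
    · rw [← Real.sqrt_sq dist_nonneg, h₁₂]
      ring_nf
    · rw [dist_comm, ← Real.sqrt_sq dist_nonneg, h₁₂]
      ring_nf
  · intro h
    refine ⟨fun s => (h.1 s).1, fun s => (h.2 s).2, fun s t => ?_⟩
    rw [(h.1 s).2 t, Real.sq_sqrt (by positivity)]
    ring

theorem areParallelLines_iff [MetricSpace X] {L₁ L₂ : Set X} :
    AreParallelLines L₁ L₂ ↔ ∃ a γ₁ γ₂, IsParallelPair a γ₁ γ₂ ∧ range γ₁ = L₁ ∧ range γ₂ = L₂ := by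
  constructor
  · rintro ⟨a, -, f, hf, h₁, h₂⟩
    rw [← range_toLp_mk] at h₁ h₂
    have hinj : InjOn f (L₁ ∪ L₂) := fun x hx y hy hxy =>
      dist_eq_zero.1 (by rw [← hf x hx y hy, hxy, dist_self])
    choose γ₁ hγ₁ hfγ₁ using fun s => (h₁ ▸ mem_range_self s : WithLp.toLp 2 (s, 0) ∈ f '' L₁)
    choose γ₂ hγ₂ hfγ₂ using fun t => (h₂ ▸ mem_range_self t : WithLp.toLp 2 (t, a) ∈ f '' L₂)
    have hmem : ∀ x, Sum.elim γ₁ γ₂ x ∈ L₁ ∪ L₂ :=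
      Sum.forall.2 ⟨fun s => .inl (hγ₁ s), fun t => .inr (hγ₂ t)⟩
    have hcomp : f ∘ Sum.elim γ₁ γ₂ = parallelLinesParam a := by
      rw [Sum.comp_elim]; exact congrArg₂ Sum.elim (funext hfγ₁) (funext hfγ₂)
    refine ⟨a, γ₁, γ₂, isParallelPair_iff_dist_sumElim.2 fun x y => ?_, ?_, ?_⟩
    · rw [← hcomp, Function.comp_apply, Function.comp_apply, hf _ (hmem x) _ (hmem y)]
    · refine (hinj.image_eq_image_iff (range_subset_iff.2 fun s => .inl (hγ₁ s))
        subset_union_left).1 ?_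
      rw [h₁, ← range_comp]
      exact congrArg range (funext hfγ₁)
    · refine (hinj.image_eq_image_iff (range_subset_iff.2 fun t => .inr (hγ₂ t))
        subset_union_right).1 ?_
      rw [h₂, ← range_comp]
      exact congrArg range (funext hfγ₂)
  · rintro ⟨a, γ₁, γ₂, h, rfl, rfl⟩
    have hdist := (isParallelPair_iff_dist_sumElim (a := |a|)).1
      (by simpa only [IsParallelPair, sq_abs] using h)
    have hfac : (parallelLinesParam |a|).FactorsThrough (Sum.elim γ₁ γ₂) := fun x y hxy =>
      dist_eq_zero.1 (by rw [← hdist, hxy, dist_self])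
    set F := Function.extend (Sum.elim γ₁ γ₂) (parallelLinesParam |a|) fun _ => 0
    have hF : ∀ x, F (Sum.elim γ₁ γ₂ x) = parallelLinesParam |a| x := hfac.extend_apply _
    refine ⟨|a|, abs_nonneg a, F, ?_, ?_, ?_⟩
    · rw [← Sum.elim_range]
      rintro _ ⟨x, rfl⟩ _ ⟨y, rfl⟩
      rw [hF, hF, hdist]
    · rw [← range_comp, ← range_toLp_mk]
      exact congrArg range (funext fun s => hF (.inl s))
    · rw [← range_comp, ← range_toLp_mk]
      exact congrArg range (funext fun t => hF (.inr t))

lemma exists_isParallelPair_of_dist_sq_eq [PseudoMetricSpace X] {g₁ g₂ : ℝ → X} {β b c : ℝ}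
    (hβ : 0 < β) (h₁ : ∀ s t, dist (g₁ s) (g₁ t) = β * |s - t|)
    (h₂ : ∀ s t, dist (g₂ s) (g₂ t) = β * |s - t|)
    (h₁₂ : ∀ s t, dist (g₁ s) (g₂ t) ^ 2 = β ^ 2 * (s - t) ^ 2 + b * (s - t) + c) :
    ∃ a p₁ p₂, IsParallelPair a p₁ p₂ ∧ range p₁ = range g₁ ∧ range p₂ = range g₂ := by
  have hdisc : discrim (β ^ 2) b c ≤ 0 := discrim_le_zero fun x => by
    simpa [sq] using sq_nonneg (dist (g₁ x) (g₂ 0)) |>.trans_eq (h₁₂ x 0)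
  have hscale : ∀ s t, β * |s / β - t / β| = |s - t| := fun s t => by
    rw [← sub_div, abs_div, abs_of_pos hβ, mul_div_cancel₀ _ hβ.ne']
  -- the shift `b / (2β²)` completes the square `β²x² + bx + c = (βx + b/(2β))² - discrim/(4β²)`
  refine ⟨√(-discrim (β ^ 2) b c / (4 * β ^ 2)), fun s => g₁ (s / β),
    fun t => g₂ (t / β + b / (2 * β ^ 2)), ⟨fun s t => ?_, fun s t => ?_, fun s t => ?_⟩, ?_, ?_⟩
  · rw [h₁, hscale]
  · rw [h₂, add_sub_add_right_eq_sub, hscale]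
  · rw [h₁₂, Real.sq_sqrt (div_nonneg (neg_nonneg.2 hdisc) (by positivity)), discrim]
    field_simp
    ring
  · exact Function.Surjective.range_comp (fun y => ⟨y * β, mul_div_cancel_right₀ y hβ.ne'⟩) g₁
  · exact Function.Surjective.range_comp (fun y => ⟨(y - b / (2 * β ^ 2)) * β,
      by rw [mul_div_cancel_right₀ _ hβ.ne', sub_add_cancel]⟩) g₂

theorem IsParallelPair.snd_const_or_exists_isParallelPair {E : Type*} [NormedAddCommGroup E]
    [InnerProductSpace ℝ E] [MetricSpace X] {a : ℝ} {γ₁ γ₂ : ℝ → WithLp 2 (E × X)}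
    (h : IsParallelPair a γ₁ γ₂) :
    ((∃ x₁, range (fun s => (γ₁ s).snd) = {x₁}) ∧ ∃ x₂, range (fun t => (γ₂ t).snd) = {x₂}) ∨
      ∃ b p₁ p₂, IsParallelPair b p₁ p₂ ∧ range p₁ = range (fun s => (γ₁ s).snd) ∧
        range p₂ = range (fun t => (γ₂ t).snd) := by
  obtain ⟨h₁, h₂, h₁₂⟩ := h
  obtain ⟨β₁, u₁, hβ₁, hu₁, hfst₁, hsnd₁⟩ := exists_fst_eq_add_smul_and_dist_snd_eq h₁
  obtain ⟨β₂, u₂, hβ₂, hu₂, hfst₂, hsnd₂⟩ := exists_fst_eq_add_smul_and_dist_snd_eq h₂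
  set w := (γ₁ 0).fst - (γ₂ 0).fst
  have hsplit : ∀ s t, dist (γ₁ s).snd (γ₂ t).snd ^ 2 + ‖w + s • u₁ - t • u₂‖ ^ 2 =
      (s - t) ^ 2 + a ^ 2 := fun s t => by
    rw [← h₁₂, WithLp.prod_dist_sq_eq_of_L2, dist_eq_norm, hfst₁, hfst₂, add_comm]
    congr 3
    simp only [w]
    abel
  obtain ⟨rfl, rfl⟩ := eq_and_eq_of_forall_norm_add_smul_sub_smul_sq_le hβ₁ hβ₂ hu₁ hu₂
    fun s t => by nlinarith [hsplit s t, sq_nonneg (dist (γ₁ s).snd (γ₂ t).snd)]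
  rcases hβ₁.eq_or_lt with rfl | hβ
  · refine .inl ⟨⟨(γ₁ 0).snd, range_eq_singleton fun s => ?_⟩,
      (γ₂ 0).snd, range_eq_singleton fun t => ?_⟩
    · exact dist_eq_zero.1 (by simpa using hsnd₁ s 0)
    · exact dist_eq_zero.1 (by simpa using hsnd₂ t 0)
  · refine .inr (exists_isParallelPair_of_dist_sq_eq hβ hsnd₁ hsnd₂ (b := -2 * ⟪w, u₁⟫)
      (c := a ^ 2 - ‖w‖ ^ 2) fun s t => ?_)
    have := hsplit s t
    rw [norm_add_smul_sub_smul_sq, real_inner_self_eq_norm_sq, hu₁] at this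
    linear_combination this

end ParallelPair

theorem proj_of_parallel_lines_general {X : Type*} [MetricSpace X] (k : ℕ)
    (L₁ L₂ : Set (WithLp 2 (EuclideanSpace ℝ (Fin k) × X)))
    (hpar : AreParallelLines L₁ L₂) :
    ((∃ x₁ : X,
        (fun p : WithLp 2 (EuclideanSpace ℝ (Fin k) × X) =>
            ((WithLp.equiv 2 (EuclideanSpace ℝ (Fin k) × X)) p).2) '' L₁ = {x₁}) ∧
      (∃ x₂ : X,
        (fun p : WithLp 2 (EuclideanSpace ℝ (Fin k) × X) =>
            ((WithLp.equiv 2 (EuclideanSpace ℝ (Fin k) × X)) p).2) '' L₂ = {x₂})) ∨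
    (IsLine ((fun p : WithLp 2 (EuclideanSpace ℝ (Fin k) × X) =>
          ((WithLp.equiv 2 (EuclideanSpace ℝ (Fin k) × X)) p).2) '' L₁) ∧
      IsLine ((fun p : WithLp 2 (EuclideanSpace ℝ (Fin k) × X) =>
          ((WithLp.equiv 2 (EuclideanSpace ℝ (Fin k) × X)) p).2) '' L₂) ∧
      AreParallelLines
        ((fun p : WithLp 2 (EuclideanSpace ℝ (Fin k) × X) =>
            ((WithLp.equiv 2 (EuclideanSpace ℝ (Fin k) × X)) p).2) '' L₁)
        ((fun p : WithLp 2 (EuclideanSpace ℝ (Fin k) × X) =>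
            ((WithLp.equiv 2 (EuclideanSpace ℝ (Fin k) × X)) p).2) '' L₂)) := by
  obtain ⟨a, γ₁, γ₂, hγ, rfl, rfl⟩ := areParallelLines_iff.1 hpar
  simp only [← range_comp]
  rcases hγ.snd_const_or_exists_isParallelPair with ⟨h₁, h₂⟩ | ⟨b, p₁, p₂, hp, h₁, h₂⟩
  · exact .inl ⟨h₁, h₂⟩
  · exact .inr ⟨⟨p₁, hp.1, h₁⟩, ⟨p₂, hp.2.1, h₂⟩, areParallelLines_iff.2 ⟨b, p₁, p₂, hp, h₁, h₂⟩⟩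

/-- Kleiner–Lott, "Locally Collapsed 3-Manifolds", Sublemma 4.4(3): the
projections to `X` of two parallel lines in `ℝᵏ ×₂ X` are either both points
or both lines, and in the latter case they are parallel lines in `X`. -/
theorem proj_of_parallel_lines {X : Type*} [MetricSpace X] (k : ℕ)
    (L₁ L₂ : Set (WithLp 2 (EuclideanSpace ℝ (Fin k) × X)))
    (h₁ : IsLine L₁) (h₂ : IsLine L₂) (hpar : AreParallelLines L₁ L₂) :
    ((∃ x₁ : X,
        (fun p : WithLp 2 (EuclideanSpace ℝ (Fin k) × X) =>
            ((WithLp.equiv 2 (EuclideanSpace ℝ (Fin k) × X)) p).2) '' L₁ = {x₁}) ∧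
      (∃ x₂ : X,
        (fun p : WithLp 2 (EuclideanSpace ℝ (Fin k) × X) =>
            ((WithLp.equiv 2 (EuclideanSpace ℝ (Fin k) × X)) p).2) '' L₂ = {x₂})) ∨
    (IsLine ((fun p : WithLp 2 (EuclideanSpace ℝ (Fin k) × X) =>
          ((WithLp.equiv 2 (EuclideanSpace ℝ (Fin k) × X)) p).2) '' L₁) ∧
      IsLine ((fun p : WithLp 2 (EuclideanSpace ℝ (Fin k) × X) =>
          ((WithLp.equiv 2 (EuclideanSpace ℝ (Fin k) × X)) p).2) '' L₂) ∧
      AreParallelLines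
        ((fun p : WithLp 2 (EuclideanSpace ℝ (Fin k) × X) =>
            ((WithLp.equiv 2 (EuclideanSpace ℝ (Fin k) × X)) p).2) '' L₁)
        ((fun p : WithLp 2 (EuclideanSpace ℝ (Fin k) × X) =>
            ((WithLp.equiv 2 (EuclideanSpace ℝ (Fin k) × X)) p).2) '' L₂)) :=
  proj_of_parallel_lines_general k L₁ L₂ hpar
end

section
/- Let X be a metric space and let ℒ be a collection of lines in X such that the union of the lines in ℒ is all of X and every pair of lines in ℒ is parallel. Then there exist a metric space Y and an isometric equivalence α : X ≃ ℝ ×₂ Y onto the ℓ²-product of ℝ and Y, such that ℒ = { α⁻¹(ℝ × {y}) : y ∈ Y }, i.e. the lines of ℒ are exactly the preimages under α of the horizontal lines ℝ × {y}. (Kleiner–Lott, 'Locally Collapsed 3-Manifolds', Sublemma 4.4, part (4).) -/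
universe u

/-!
Fix one line `γ₀` of the family. Every other line `L` can be parametrized by some `γ` in step
with `γ₀`, so that `d(γ₀ s, γ t) = √((s - t)² + a²)`. For two lines `γ₁, γ₂` parametrized this
way, parallelism gives `d(γ₁ s, γ₂ t) = √((s - (εt + c))² + a²)` with `ε = ±1`; the triangle
inequality through the point of `γ₀` where a Euclidean segment from `γ₁ s` to `γ₂ t` would cross
it bounds this by `√((s - t)² + (|a₁| + |a₂|)²)`, which forces `ε = 1` and `c = 0`. Hence
`(t, L) ↦ γ_L t` is an isometry onto `X` from `ℝ ×₂ ℒ`, where `d(L, L') := d(γ_L 0, γ_L' 0)`.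
-/

open Set Function

lemma WithLp.prod_dist_eq_sqrt {A B : Type*} [PseudoMetricSpace A] [PseudoMetricSpace B]
    (x y : WithLp 2 (A × B)) :
    dist x y = √(dist x.fst y.fst ^ 2 + dist x.snd y.snd ^ 2) := by
  rw [WithLp.prod_dist_eq_add (by norm_num : 0 < (2 : ENNReal).toReal)]
  norm_num [Real.sqrt_eq_rpow]

lemma Isometry.exists_eq_add_mul {g : ℝ → ℝ} (hg : Isometry g) :
    ∃ ε : ℝ, |ε| = 1 ∧ ∀ t, g t = g 0 + ε * t := by
  have h : ∀ s t, (g s - g t) ^ 2 = (s - t) ^ 2 := fun s t => by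
    rw [← sq_abs, ← Real.dist_eq, hg.dist_eq, Real.dist_eq, sq_abs]
  refine ⟨g 1 - g 0, by simpa [Real.dist_eq] using hg.dist_eq 1 0, fun t => ?_⟩
  nlinarith [h t 0, h 1 0, h t 1, sq_nonneg (g t - g 0 - (g 1 - g 0) * t)]

lemma IsLine.exists_isometry {X : Type*} [MetricSpace X] {L : Set X} (h : IsLine L) :
    ∃ γ : ℝ → X, Isometry γ ∧ range γ = L :=
  let ⟨γ, hγ, hr⟩ := h
  ⟨γ, .of_dist_eq fun s t => by rw [hγ, Real.dist_eq], hr⟩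

lemma exists_sqrt_add_sqrt_eq {b₁ b₂ : ℝ} (h₁ : 0 ≤ b₁) (h₂ : 0 ≤ b₂) (s t : ℝ) :
    ∃ q, √((q - s) ^ 2 + b₁ ^ 2) + √((q - t) ^ 2 + b₂ ^ 2) =
      √((s - t) ^ 2 + (b₁ + b₂) ^ 2) := by
  rcases (add_nonneg h₁ h₂).eq_or_lt with hS | hS
  · obtain ⟨rfl, rfl⟩ : b₁ = 0 ∧ b₂ = 0 := ⟨by linarith, by linarith⟩
    exact ⟨s, by simp⟩
  -- `q` is where the segment from `(s, b₁)` to `(t, -b₂)` crosses the axis.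
  set r := √((s - t) ^ 2 + (b₁ + b₂) ^ 2)
  have hscale : ∀ {b x : ℝ}, 0 ≤ b → x ^ 2 = (b / (b₁ + b₂)) ^ 2 * (s - t) ^ 2 →
      √(x ^ 2 + b ^ 2) = b / (b₁ + b₂) * r := fun {b x} hb hx => by
    rw [← Real.sqrt_sq (by positivity : 0 ≤ b / (b₁ + b₂)), ← Real.sqrt_mul (sq_nonneg _), hx]
    congr 1
    field_simp
  refine ⟨(b₁ * t + b₂ * s) / (b₁ + b₂), ?_⟩
  rw [hscale h₁ (by field_simp; ring), hscale h₂ (by field_simp; ring), ← add_mul, ← add_div,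
    div_self hS.ne', one_mul]

variable {X : Type*} [MetricSpace X]

/-- `γ s` and `γ' t` are as far apart as `(s, 0)` and `(t, a)` in the Euclidean plane. -/
def AreParallelAt (γ γ' : ℝ → X) (a : ℝ) : Prop :=
  ∀ s t, dist (γ s) (γ' t) = √((s - t) ^ 2 + a ^ 2)

namespace AreParallelAt

variable {γ γ' : ℝ → X} {a : ℝ}

lemma dist_zero (h : AreParallelAt γ γ' a) : dist (γ 0) (γ' 0) = |a| := by
  simp [h 0 0, Real.sqrt_sq_eq_abs]

lemma of_dist (h : AreParallelAt γ γ' a) : AreParallelAt γ γ' (dist (γ 0) (γ' 0)) := by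
  intro s t
  rw [h, h.dist_zero, sq_abs]

lemma eq_of_apply_zero_eq (h : AreParallelAt γ γ' a) (h0 : γ 0 = γ' 0) : γ = γ' := by
  have ha : |a| = 0 := by rw [← h.dist_zero, h0, dist_self]
  funext t
  rw [← dist_eq_zero, h, sub_self, ← sq_abs a, ha]
  simp

lemma dist_le {γ₀ γ₁ γ₂ : ℝ → X} {a₁ a₂ : ℝ} (h₁ : AreParallelAt γ₀ γ₁ a₁)
    (h₂ : AreParallelAt γ₀ γ₂ a₂) (s t : ℝ) :
    dist (γ₁ s) (γ₂ t) ≤ √((s - t) ^ 2 + (|a₁| + |a₂|) ^ 2) := by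
  obtain ⟨q, hq⟩ := exists_sqrt_add_sqrt_eq (abs_nonneg a₁) (abs_nonneg a₂) s t
  calc dist (γ₁ s) (γ₂ t) ≤ dist (γ₀ q) (γ₁ s) + dist (γ₀ q) (γ₂ t) := dist_triangle_left _ _ _
    _ = _ := by rw [h₁, h₂, ← hq, sq_abs, sq_abs]

end AreParallelAt

lemma isometry_of_areParallelAt {Y : Type*} [PseudoMetricSpace Y] {γ : Y → ℝ → X}
    (h : ∀ y y', AreParallelAt (γ y) (γ y') (dist y y')) :
    Isometry fun p : WithLp 2 (ℝ × Y) => γ p.snd p.fst :=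
  .of_dist_eq fun p q => by rw [h, WithLp.prod_dist_eq_sqrt, Real.dist_eq, sq_abs]

lemma eq_one_and_eq_zero_of_sq_sub_le {ε c K : ℝ} (hε : |ε| = 1)
    (h : ∀ s t : ℝ, (s - (ε * t + c)) ^ 2 ≤ (s - t) ^ 2 + K) : ε = 1 ∧ c = 0 := by
  obtain rfl : ε = 1 := by
    rcases abs_eq zero_le_one |>.mp hε with rfl | rfl
    · rfl
    have := h ((c + |K| + 1) / 2) ((c + |K| + 1) / 2)
    nlinarith [le_abs_self K, abs_nonneg K]
  refine ⟨rfl, by_contra fun hc => ?_⟩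
  have hs : -(|K| + 1) / (2 * c) * c = -(|K| + 1) / 2 := by field_simp
  nlinarith [h (-(|K| + 1) / (2 * c)) 0, le_abs_self K, sq_nonneg c]

namespace AreParallelLines

lemma exists_dist_eq {γ γ' : ℝ → X} (h : AreParallelLines (range γ) (range γ'))
    (hγ : Isometry γ) (hγ' : Isometry γ') :
    ∃ ε c a : ℝ, |ε| = 1 ∧ ∀ s t, dist (γ s) (γ' t) = √((s - (ε * t + c)) ^ 2 + a ^ 2) := by
  obtain ⟨a, -, f, hf, h₁, h₂⟩ := h
  have hf₁ (t : ℝ) : (f (γ t)).snd = 0 := (h₁ ▸ mem_image_of_mem f (mem_range_self t) :)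
  have hf₂ (t : ℝ) : (f (γ' t)).snd = a := (h₂ ▸ mem_image_of_mem f (mem_range_self t) :)
  have hfst {δ : ℝ → X} {b : ℝ} (hδ : Isometry δ) (hmem : ∀ t, δ t ∈ range γ ∪ range γ')
      (hsnd : ∀ t, (f (δ t)).snd = b) : Isometry fun t => (f (δ t)).fst :=
    .of_dist_eq fun s t => by
      rw [← hδ.dist_eq s t, ← hf _ (hmem s) _ (hmem t), WithLp.prod_dist_eq_sqrt, hsnd, hsnd,
        dist_self, zero_pow two_ne_zero, add_zero, Real.sqrt_sq dist_nonneg]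
  obtain ⟨ε₁, hε₁, hu⟩ := (hfst hγ (fun t => .inl (mem_range_self t)) hf₁).exists_eq_add_mul
  obtain ⟨ε₂, hε₂, hv⟩ := (hfst hγ' (fun t => .inr (mem_range_self t)) hf₂).exists_eq_add_mul
  refine ⟨ε₁ * ε₂, ε₁ * ((f (γ' 0)).fst - (f (γ 0)).fst), a, by rw [abs_mul, hε₁, hε₂, one_mul],
    fun s t => ?_⟩
  rw [← hf _ (.inl (mem_range_self s)) _ (.inr (mem_range_self t)), WithLp.prod_dist_eq_sqrt,
    Real.dist_eq, Real.dist_eq, hf₁, hf₂, hu s, hv t, sq_abs, sq_abs]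
  congr 1
  rcases abs_eq zero_le_one |>.mp hε₁ with rfl | rfl <;> ring

lemma exists_areParallelAt {γ₀ : ℝ → X} {L : Set X} (h : AreParallelLines (range γ₀) L)
    (hγ₀ : Isometry γ₀) (hL : IsLine L) :
    ∃ γ : ℝ → X, Isometry γ ∧ range γ = L ∧ ∃ a, AreParallelAt γ₀ γ a := by
  obtain ⟨γ', hγ', rfl⟩ := hL.exists_isometry
  obtain ⟨ε, c, a, hε, hd⟩ := h.exists_dist_eq hγ₀ hγ'
  have hε' : ε * ε = 1 := by rw [← abs_mul_abs_self, hε, one_mul]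
  have hφ : Isometry fun t : ℝ => ε * (t - c) :=
    .of_dist_eq fun s t => by
      simp only [Real.dist_eq, ← mul_sub, abs_mul, hε, sub_sub_sub_cancel_right, one_mul]
  have hφ' : Surjective fun t : ℝ => ε * (t - c) := fun t => ⟨ε * t + c, by grind⟩
  refine ⟨γ' ∘ fun t => ε * (t - c), hγ'.comp hφ, hφ'.range_comp γ', a, fun s t => ?_⟩
  rw [comp_apply, hd, ← mul_assoc, hε', one_mul, sub_add_cancel]

lemma areParallelAt {γ₀ γ₁ γ₂ : ℝ → X} {a₁ a₂ : ℝ} (h : AreParallelLines (range γ₁) (range γ₂))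
    (hγ₁ : Isometry γ₁) (hγ₂ : Isometry γ₂) (h₁ : AreParallelAt γ₀ γ₁ a₁)
    (h₂ : AreParallelAt γ₀ γ₂ a₂) :
    AreParallelAt γ₁ γ₂ (dist (γ₁ 0) (γ₂ 0)) := by
  obtain ⟨ε, c, a, hε, hd⟩ := h.exists_dist_eq hγ₁ hγ₂
  have hle (s t : ℝ) : (s - (ε * t + c)) ^ 2 ≤ (s - t) ^ 2 + ((|a₁| + |a₂|) ^ 2 - a ^ 2) := by
    have := h₁.dist_le h₂ s t
    rw [hd, Real.sqrt_le_sqrt_iff (by positivity)] at this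
    linarith
  obtain ⟨rfl, rfl⟩ := eq_one_and_eq_zero_of_sq_sub_le hε hle
  exact AreParallelAt.of_dist (a := a) fun s t => by simpa using hd s t

end AreParallelLines

lemma exists_areParallelAt_family {ℒ : Set (Set X)} (hline : ∀ L ∈ ℒ, IsLine L)
    (hpar : ∀ L₁ ∈ ℒ, ∀ L₂ ∈ ℒ, AreParallelLines L₁ L₂) :
    ∃ γ : ℒ → ℝ → X, (∀ L, Isometry (γ L) ∧ range (γ L) = L) ∧
      ∀ L L', AreParallelAt (γ L) (γ L') (dist (γ L 0) (γ L' 0)) := by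
  rcases ℒ.eq_empty_or_nonempty with rfl | ⟨L₀, hL₀⟩
  · exact ⟨fun L => L.2.elim, fun L => L.2.elim, fun L => L.2.elim⟩
  obtain ⟨γ₀, hγ₀, rfl⟩ := (hline L₀ hL₀).exists_isometry
  choose γ hγ hr a ha using fun L : ℒ =>
    (hpar _ hL₀ L L.2).exists_areParallelAt hγ₀ (hline L L.2)
  refine ⟨γ, fun L => ⟨hγ L, hr L⟩, fun L L' => ?_⟩
  have hLL' : AreParallelLines (range (γ L)) (range (γ L')) := by
    rw [hr, hr]
    exact hpar _ L.2 _ L'.2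
  exact hLL'.areParallelAt (hγ L) (hγ L') (ha L) (ha L')

/-- Kleiner–Lott, "Locally Collapsed 3-Manifolds", Sublemma 4.4(4): if a metric
space is covered by a family of pairwise parallel lines, then it splits
isometrically as `ℝ ×₂ Y`, with the given lines being precisely the horizontal
lines `ℝ × {y}`. -/
theorem splitting_of_parallel_line_cover {X : Type u} [MetricSpace X]
    (ℒ : Set (Set X))
    (hline : ∀ L ∈ ℒ, IsLine L)
    (hcover : ⋃₀ ℒ = Set.univ)
    (hpar : ∀ L₁ ∈ ℒ, ∀ L₂ ∈ ℒ, AreParallelLines L₁ L₂) :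
    ∃ (Y : Type u) (_ : MetricSpace Y) (α : X ≃ᵢ WithLp 2 (ℝ × Y)),
      ℒ = {L : Set X | ∃ y : Y,
        L = Set.range fun t : ℝ =>
          α.symm ((WithLp.equiv 2 (ℝ × Y)).symm (t, y))} := by
  obtain ⟨γ, hγ, hγpar⟩ := exists_areParallelAt_family hline hpar
  have hinj : Injective fun L : ℒ => γ L 0 := fun L L' h =>
    Subtype.ext <| by rw [← (hγ L).2, ← (hγ L').2, (hγpar L L').eq_of_apply_zero_eq h]
  let _ : MetricSpace ℒ := .induced _ hinj inferInstance
  have hiso : Isometry fun p : WithLp 2 (ℝ × ℒ) => γ p.snd p.fst :=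
    isometry_of_areParallelAt hγpar
  have hsurj : Surjective fun p : WithLp 2 (ℝ × ℒ) => γ p.snd p.fst := fun x => by
    obtain ⟨L, hL, hx⟩ := mem_sUnion.mp (hcover ▸ mem_univ x)
    obtain ⟨t, rfl⟩ : x ∈ range (γ ⟨L, hL⟩) := (hγ ⟨L, hL⟩).2 ▸ hx
    exact ⟨WithLp.toLp 2 (t, ⟨L, hL⟩), rfl⟩
  let E : WithLp 2 (ℝ × ℒ) ≃ᵢ X := ⟨.ofBijective _ ⟨hiso.injective, hsurj⟩, hiso⟩
  refine ⟨ℒ, inferInstance, E.symm, Set.ext fun L => ⟨fun hL => ?_, ?_⟩⟩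
  · exact ⟨⟨L, hL⟩, (hγ ⟨L, hL⟩).2.symm⟩
  · rintro ⟨L', rfl⟩
    exact (hγ L').2 ▸ L'.2
end

section
/- Let X be a metric space and let k, l ∈ ℕ. Suppose there exist metric spaces Y and Z together with isometric equivalences X ≃ ℝᵏ ×₂ Y and X ≃ ℝˡ ×₂ Z, where ℝᵏ = EuclideanSpace ℝ (Fin k) and ×₂ is the ℓ²-product. Then there exist a natural number m with k ≤ m and l ≤ m, and a metric space W, such that X is isometric to ℝᵐ ×₂ W, Y is isometric to ℝ^{m−k} ×₂ W, and Z is isometric to ℝ^{m−l} ×₂ W. (This expresses Kleiner–Lott, 'Locally Collapsed 3-Manifolds', Lemma 4.3, part (2): any two splittings of a metric space are compatible with a third splitting.) -/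
/-!
Translating along the line factor of a splitting `X ≃ᵢ ℝ ×₂ Z` gives a flow `φ` on `X` with
`d(φ s x, x')² = d(x, x')² + s² + 2 s (u x - u x')`, where `u` is the line coordinate;
conversely, any such flow splits a line off `X`.

If `X = ℝᵏ ×₂ Y`, every orbit of `φ` is a geodesic line. Its `ℝᵏ`-component is affine, because
metric midpoints in an ℓ²-product project to metric midpoints and `ℝᵏ` is strictly convex. Since
each `φ s` is an isometry, all these affine lines have the same velocity `a`. If `‖a‖ = 1`, the flow
only moves the Euclidean factor, and then `Z ≃ᵢ ℝᵏ⁻¹ ×₂ Y`. If `‖a‖ < 1`, the `Y`-components form a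
translation flow of `Y`, of speed `√(1 - ‖a‖²)`. Then `Y ≃ᵢ ℝ ×₂ Y₀` and `Z ≃ᵢ ℝᵏ ×₂ Y₀`.
Splitting off the lines of `ℝˡ` one at a time gives the general case by induction on `l`.
-/

open scoped RealInnerProductSpace
open Module WithLp
open IsometryEquiv (withLpProdAssoc withLpProdCongr withLpUniqueProd)

local notation:35 X " ×₂ " Y:35 => WithLp 2 (X × Y)
local notation "ℝ^" n:max => EuclideanSpace ℝ (Fin n)

noncomputable def LinearIsometryEquiv.euclideanSpaceOfFinrankEq {F : Type*} [NormedAddCommGroup F]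
    [InnerProductSpace ℝ F] [FiniteDimensional ℝ F] {n : ℕ} (h : finrank ℝ F = n) :
    F ≃ₗᵢ[ℝ] ℝ^n :=
  ((stdOrthonormalBasis ℝ F).reindex (finCongr h)).repr

theorem WithLp.finrank_prod (p : ENNReal) (K E F : Type*) [DivisionRing K] [AddCommGroup E]
    [Module K E] [FiniteDimensional K E] [AddCommGroup F] [Module K F] [FiniteDimensional K F] :
    finrank K (WithLp p (E × F)) = finrank K E + finrank K F :=
  (WithLp.linearEquiv p K (E × F)).finrank_eq.trans Module.finrank_prod

noncomputable def IsometryEquiv.euclideanSpaceProdAssoc (a b : ℕ) (W : Type*) [MetricSpace W] :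
    ℝ^a ×₂ (ℝ^b ×₂ W) ≃ᵢ ℝ^(a + b) ×₂ W :=
  (withLpProdAssoc 2 _ _ W).symm.trans (withLpProdCongr 2
    (LinearIsometryEquiv.euclideanSpaceOfFinrankEq (by simp [WithLp.finrank_prod])).toIsometryEquiv
    (IsometryEquiv.refl W))

section Product

variable {α β : Type*} [MetricSpace α] [MetricSpace β]

theorem WithLp.prod_dist_sq_eq_of_L2_s9 (x y : α ×₂ β) :
    dist x y ^ 2 = dist x.fst y.fst ^ 2 + dist x.snd y.snd ^ 2 := by
  rw [WithLp.prod_dist_eq_add (by simp), ENNReal.toReal_ofNat, ← Real.sqrt_eq_rpow,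
    Real.rpow_two, Real.rpow_two, Real.sq_sqrt (by positivity)]

/-- Equality in the triangle inequality `d(P, Q) ≤ d(P, M) + d(M, Q)` forces the two
legs of each component to be equal. -/
theorem WithLp.dist_fst_eq_half_of_dist_eq_half {P M Q : α ×₂ β}
    (hPM : dist P M = dist P Q / 2) (hMQ : dist M Q = dist P Q / 2) :
    dist P.fst M.fst = dist P.fst Q.fst / 2 ∧ dist M.fst Q.fst = dist P.fst Q.fst / 2 := by
  have h₁ := WithLp.prod_dist_sq_eq_of_L2_s9 P M
  have h₂ := WithLp.prod_dist_sq_eq_of_L2_s9 M Q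
  have h₃ := WithLp.prod_dist_sq_eq_of_L2_s9 P Q
  rw [hPM] at h₁
  rw [hMQ] at h₂
  have hr := pow_le_pow_left₀ dist_nonneg (dist_triangle P.fst M.fst Q.fst) 2
  have hs := pow_le_pow_left₀ dist_nonneg (dist_triangle P.snd M.snd Q.snd) 2
  have hp : dist P.fst M.fst = dist M.fst Q.fst := by
    nlinarith [sq_nonneg (dist P.fst M.fst - dist M.fst Q.fst),
      sq_nonneg (dist P.snd M.snd - dist M.snd Q.snd)]
  have hr' : dist P.fst Q.fst = 2 * dist P.fst M.fst := by
    rw [← pow_left_inj₀ dist_nonneg (by positivity) two_ne_zero]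
    nlinarith [sq_nonneg (dist P.snd M.snd - dist M.snd Q.snd)]
  constructor <;> linarith

end Product

theorem eq_zero_of_forall_norm_add_smul_le {E : Type*} [NormedAddCommGroup E] [NormedSpace ℝ E]
    {u v : E} {C : ℝ} (h : ∀ t : ℝ, ‖u + t • v‖ ≤ C) : v = 0 := by
  by_contra hv
  have hv : 0 < ‖v‖ := norm_pos_iff.2 hv
  have hC : ‖u‖ ≤ C := by simpa using h 0
  set t := (C + ‖u‖ + 1) / ‖v‖
  have ht : ‖t • v‖ = C + ‖u‖ + 1 := by
    rw [norm_smul, Real.norm_of_nonneg (div_nonneg (by linarith [norm_nonneg u]) hv.le),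
      div_mul_cancel₀ _ hv.ne']
  have := norm_sub_le (u + t • v) u
  rw [add_sub_cancel_left] at this
  linarith [h t, norm_nonneg u]

theorem Isometry.exists_fst_eq_add_smul {E Y : Type*} [NormedAddCommGroup E] [NormedSpace ℝ E]
    [StrictConvexSpace ℝ E] [MetricSpace Y] {γ : ℝ → E ×₂ Y} (hγ : Isometry γ) :
    ∃ v : E, ‖v‖ ≤ 1 ∧ ∀ t, (γ t).fst = (γ 0).fst + t • v := by
  have hmid (s t : ℝ) : (γ (midpoint ℝ s t)).fst = midpoint ℝ (γ s).fst (γ t).fst := by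
    obtain ⟨h₁, h₂⟩ := WithLp.dist_fst_eq_half_of_dist_eq_half (P := γ s) (M := γ (midpoint ℝ s t))
      (Q := γ t) (by simp [hγ.dist_eq, dist_left_midpoint, div_eq_inv_mul])
      (by simp [hγ.dist_eq, dist_midpoint_right, div_eq_inv_mul])
    exact eq_midpoint_of_dist_eq_half h₁ h₂
  let f := AffineMap.ofMapMidpoint _ hmid ((WithLp.continuous_fst ..).comp hγ.continuous)
  have hf (t : ℝ) : f.linear t = (γ t).fst - (γ 0).fst := by
    have h := f.linearMap_vsub t 0
    rw [vsub_eq_sub, sub_zero] at h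
    exact h
  refine ⟨f.linear 1, ?_, fun t => ?_⟩
  · calc ‖f.linear 1‖ = dist (γ 1).fst (γ 0).fst := by rw [hf, dist_eq_norm]
      _ ≤ dist (γ 1) (γ 0) := WithLp.dist_fst_le _ _
      _ = 1 := by simp [hγ.dist_eq]
  · rw [← map_smul, smul_eq_mul, mul_one, hf, add_sub_cancel]

variable {X Y : Type*} [MetricSpace X] [MetricSpace Y]

/-- The model is `Y = ℝ ×₂ Z` with `ψ s (r, z) = (r + √κ s, z)` and `w (r, z) = √κ r`. -/
structure IsTranslationFlow (κ : ℝ) (w : Y → ℝ) (ψ : ℝ → Y → Y) : Prop where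
  dist_sq (s : ℝ) (y y' : Y) :
    dist (ψ s y) y' ^ 2 = dist y y' ^ 2 + κ * s ^ 2 + 2 * s * (w y - w y')

namespace IsTranslationFlow

variable {κ : ℝ} {w : Y → ℝ} {ψ : ℝ → Y → Y}

theorem dist_apply_self_sq (hψ : IsTranslationFlow κ w ψ) (s : ℝ) (y : Y) :
    dist (ψ s y) y ^ 2 = κ * s ^ 2 := by
  simpa using hψ.dist_sq s y y

theorem zero_apply (hψ : IsTranslationFlow κ w ψ) (y : Y) : ψ 0 y = y := by
  simpa using hψ.dist_apply_self_sq 0 y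

theorem coord_apply (hψ : IsTranslationFlow κ w ψ) (s : ℝ) (y : Y) : w (ψ s y) = w y + κ * s := by
  rcases eq_or_ne s 0 with rfl | hs
  · simp [hψ.zero_apply]
  have h := hψ.dist_sq s y (ψ s y)
  rw [dist_self, dist_comm, hψ.dist_apply_self_sq] at h
  have : 2 * s * (κ * s + w y - w (ψ s y)) = 0 := by linear_combination -h
  simp only [mul_eq_zero, OfNat.ofNat_ne_zero, hs, false_or] at this
  linarith

theorem dist_apply_apply (hψ : IsTranslationFlow κ w ψ) (s : ℝ) (y y' : Y) :
    dist (ψ s y) (ψ s y') = dist y y' := by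
  have h₁ := hψ.dist_sq s y (ψ s y')
  have h₂ := hψ.dist_sq s y' y
  rw [dist_comm y] at h₁
  rw [dist_comm y'] at h₂
  rw [← pow_left_inj₀ dist_nonneg dist_nonneg two_ne_zero]
  linear_combination h₁ + h₂ - 2 * s * hψ.coord_apply s y'

theorem apply_apply (hψ : IsTranslationFlow κ w ψ) (s t : ℝ) (y : Y) :
    ψ s (ψ t y) = ψ (s + t) y := by
  have h₁ := hψ.dist_sq s (ψ t y) (ψ (s + t) y)
  have h₂ := hψ.dist_sq (s + t) y (ψ t y)
  rw [dist_comm y, hψ.dist_apply_self_sq, dist_comm (ψ (s + t) y)] at h₂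
  have h : dist (ψ s (ψ t y)) (ψ (s + t) y) ^ 2 = 0 := by
    rw [h₁, h₂, hψ.coord_apply, hψ.coord_apply]
    ring
  exact dist_eq_zero.1 (pow_eq_zero_iff two_ne_zero |>.1 h)

theorem isometry_orbit (hψ : IsTranslationFlow 1 w ψ) (y : Y) : Isometry (ψ · y) := by
  refine Isometry.of_dist_eq fun s t => ?_
  rw [← pow_left_inj₀ dist_nonneg dist_nonneg two_ne_zero, ← sub_add_cancel s t, ← hψ.apply_apply,
    hψ.dist_apply_self_sq, Real.dist_eq, sq_abs, sub_add_cancel, one_mul]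

theorem rescale {τ : ℝ} (hψ : IsTranslationFlow (τ ^ 2) w ψ) (hτ : τ ≠ 0) :
    IsTranslationFlow 1 (fun y => w y / τ) (fun s => ψ (s / τ)) where
  dist_sq s y y' := by
    rw [hψ.dist_sq]
    field_simp

theorem exists_forall_eq (hψ : IsTranslationFlow 0 w ψ) : ∃ c, ∀ y, w y = c := by
  rcases isEmpty_or_nonempty Y with _ | ⟨⟨y₀⟩⟩
  · exact ⟨0, isEmptyElim⟩
  refine ⟨w y₀, fun y => ?_⟩
  have h := hψ.dist_sq 1 y y₀
  have hy : ψ 1 y = y := by simpa using hψ.dist_apply_self_sq 1 y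
  rw [hy] at h
  linarith

noncomputable def splitting (hψ : IsTranslationFlow 1 w ψ) : Y ≃ᵢ ℝ ×₂ {y // w y = 0} :=
  IsometryEquiv.symm
  { toFun x := ψ x.fst x.snd
    invFun y := toLp 2 (w y, ⟨ψ (-w y) y, by rw [hψ.coord_apply]; ring⟩)
    left_inv x := by
      have hx : w (ψ x.fst x.snd) = x.fst := by rw [hψ.coord_apply, x.snd.2]; ring
      simp only [hx, hψ.apply_apply, neg_add_cancel, hψ.zero_apply]
      rfl
    right_inv y := by simp [hψ.apply_apply, hψ.zero_apply]
    isometry_toFun := Isometry.of_dist_eq fun x x' => by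
      have hx : ψ x.fst x.snd = ψ x'.fst (ψ (x.fst - x'.fst) x.snd) := by
        rw [hψ.apply_apply, add_sub_cancel]
      rw [← pow_left_inj₀ dist_nonneg dist_nonneg two_ne_zero, WithLp.prod_dist_sq_eq_of_L2_s9, hx,
        hψ.dist_apply_apply, hψ.dist_sq, x.snd.2, x'.snd.2, Subtype.dist_eq, Real.dist_eq, sq_abs]
      ring }

theorem splitting_fst (hψ : IsTranslationFlow 1 w ψ) (y : Y) : (hψ.splitting y).fst = w y := rfl

theorem coord_splitting_symm (hψ : IsTranslationFlow 1 w ψ) (p : ℝ ×₂ {y // w y = 0}) :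
    w (hψ.splitting.symm p) = p.fst := by
  rw [← hψ.splitting_fst, IsometryEquiv.apply_symm_apply]

end IsTranslationFlow

theorem IsometryEquiv.isTranslationFlow_fst {Z : Type*} [MetricSpace Z] (G : X ≃ᵢ ℝ ×₂ Z) :
    IsTranslationFlow 1 (fun x => (G x).fst)
      (fun t x => G.symm (toLp 2 ((G x).fst + t, (G x).snd))) where
  dist_sq t x x' := by
    rw [← G.dist_eq, G.apply_symm_apply, ← G.dist_eq x, WithLp.prod_dist_sq_eq_of_L2_s9,
      WithLp.prod_dist_sq_eq_of_L2_s9]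
    simp only [WithLp.toLp_fst, WithLp.toLp_snd, Real.dist_eq, sq_abs]
    ring

noncomputable def IsometryEquiv.cancelRealLeft {V Z : Type*} [MetricSpace V] [MetricSpace Z]
    (G : ℝ ×₂ V ≃ᵢ ℝ ×₂ Z) (c : ℝ) (hG : ∀ x, (G x).fst = x.fst + c) : V ≃ᵢ Z :=
  have hfib (v : V) : G (toLp 2 (-c, v)) = toLp 2 (0, (G (toLp 2 (-c, v))).snd) :=
    (WithLp.ext_iff _).2 (Prod.ext (by simp [hG]) rfl)
  have hfib' (z : Z) : G.symm (toLp 2 (0, z)) = toLp 2 (-c, (G.symm (toLp 2 (0, z))).snd) :=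
    (WithLp.ext_iff _).2 (Prod.ext (by
      have h := hG (G.symm (toLp 2 (0, z)))
      simp only [IsometryEquiv.apply_symm_apply, WithLp.toLp_fst] at h
      simp only [WithLp.ofLp_fst]
      linarith) rfl)
  { toFun v := (G (toLp 2 (-c, v))).snd
    invFun z := (G.symm (toLp 2 (0, z))).snd
    left_inv v := by
      change (G.symm (toLp 2 (0, _))).snd = v
      rw [← hfib, G.symm_apply_apply]
      rfl
    right_inv z := by
      change (G (toLp 2 (-c, _))).snd = z
      rw [← hfib', G.apply_symm_apply]
      rfl
    isometry_toFun := Isometry.of_dist_eq fun v v' => by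
      have h := congrArg (· ^ 2) (G.dist_eq (toLp 2 (-c, v)) (toLp 2 (-c, v')))
      rw [hfib v, hfib v', WithLp.prod_dist_sq_eq_of_L2_s9, WithLp.prod_dist_sq_eq_of_L2_s9] at h
      rw [← pow_left_inj₀ dist_nonneg dist_nonneg two_ne_zero]
      simpa using h }

theorem isTranslationFlow_inner_add_smul {F : Type*} [NormedAddCommGroup F] [InnerProductSpace ℝ F]
    {b : F} (hb : ‖b‖ = 1) : IsTranslationFlow 1 (fun f => ⟪b, f⟫) (fun s f => f + s • b) where
  dist_sq s f f' := by
    rw [dist_eq_norm, dist_eq_norm, show f + s • b - f' = (f - f') + s • b by abel,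
      norm_add_sq_real, inner_smul_right, norm_smul, hb, mul_one, Real.norm_eq_abs, sq_abs,
      inner_sub_left, real_inner_comm b f, real_inner_comm b f']
    ring

theorem nonempty_isometryEquiv_of_fst_eq_inner {F W Z : Type*} [NormedAddCommGroup F]
    [InnerProductSpace ℝ F] [FiniteDimensional ℝ F] [MetricSpace W] [MetricSpace Z] {n : ℕ}
    (hF : finrank ℝ F = n + 1) {b : F} (hb : ‖b‖ = 1) (c : ℝ) (G : F ×₂ W ≃ᵢ ℝ ×₂ Z)
    (hG : ∀ x, (G x).fst = ⟪b, x.fst⟫ + c) : Nonempty (Z ≃ᵢ ℝ^n ×₂ W) := by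
  have hflow := isTranslationFlow_inner_add_smul hb
  let e := hflow.splitting
  have : Fact (finrank ℝ F = n + 1) := ⟨hF⟩
  let e₀ : {f : F // ⟪b, f⟫ = 0} ≃ᵢ ℝ^n :=
    IsometryEquiv.trans
      { toEquiv := Equiv.subtypeEquivRight fun _ =>
          Submodule.mem_orthogonal_singleton_iff_inner_right.symm
        isometry_toFun := fun _ _ => rfl }
      (LinearIsometryEquiv.euclideanSpaceOfFinrankEq
        (Submodule.finrank_orthogonal_span_singleton (by rintro rfl; simp at hb))).toIsometryEquiv
  let G' := (withLpProdAssoc 2 _ _ W).symm.trans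
    ((withLpProdCongr 2 e.symm (IsometryEquiv.refl W)).trans G)
  have hG' : ∀ x, (G' x).fst = x.fst + c := by
    intro x
    simp [G', hG, e, hflow.coord_splitting_symm]
  exact ⟨(G'.cancelRealLeft c hG').symm.trans (withLpProdCongr 2 e₀ (IsometryEquiv.refl W))⟩

section EuclideanFactor

variable {E : Type*} [NormedAddCommGroup E] [InnerProductSpace ℝ E]
  {u : E ×₂ Y → ℝ} {φ : ℝ → E ×₂ Y → E ×₂ Y}

theorem IsTranslationFlow.exists_fst_apply_eq_add_smul (hφ : IsTranslationFlow 1 u φ) :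
    ∃ a : E, ‖a‖ ≤ 1 ∧ ∀ t x, (φ t x).fst = x.fst + t • a := by
  choose v hv₁ hv using fun x => (hφ.isometry_orbit x).exists_fst_eq_add_smul
  simp only [hφ.zero_apply] at hv
  rcases isEmpty_or_nonempty (E ×₂ Y) with _ | ⟨⟨x₀⟩⟩
  · exact ⟨0, by simp, fun _ x => isEmptyElim x⟩
  refine ⟨v x₀, hv₁ x₀, fun t x => ?_⟩
  suffices v x - v x₀ = 0 by rw [hv, sub_eq_zero.1 this]
  refine eq_zero_of_forall_norm_add_smul_le (u := x.fst - x₀.fst) (C := dist x x₀) fun t => ?_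
  calc ‖x.fst - x₀.fst + t • (v x - v x₀)‖ = dist (φ t x).fst (φ t x₀).fst := by
        rw [hv, hv, dist_eq_norm]; congr 1; module
    _ ≤ dist (φ t x) (φ t x₀) := WithLp.dist_fst_le _ _
    _ = dist x x₀ := hφ.dist_apply_apply ..

theorem IsTranslationFlow.exists_eq_inner_add (hφ : IsTranslationFlow 1 u φ) :
    ∃ (a : E) (h : Y → ℝ) (ψ : ℝ → Y → Y), ‖a‖ ≤ 1 ∧ (∀ x, u x = ⟪a, x.fst⟫ + h x.snd) ∧
      IsTranslationFlow (1 - ‖a‖ ^ 2) h ψ := by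
  obtain ⟨a, ha, hφa⟩ := hφ.exists_fst_apply_eq_add_smul
  set h : E ×₂ Y → ℝ := fun x => u x - ⟪a, x.fst⟫ with h_def
  have hsnd (s : ℝ) (x x' : E ×₂ Y) : dist (φ s x).snd x'.snd ^ 2 =
      dist x.snd x'.snd ^ 2 + (1 - ‖a‖ ^ 2) * s ^ 2 + 2 * s * (h x - h x') := by
    have hd := hφ.dist_sq s x x'
    rw [WithLp.prod_dist_sq_eq_of_L2_s9, WithLp.prod_dist_sq_eq_of_L2_s9, hφa, dist_eq_norm,
      dist_eq_norm, show x.fst + s • a - x'.fst = (x.fst - x'.fst) + s • a by abel,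
      norm_add_sq_real, inner_smul_right, norm_smul, Real.norm_eq_abs, mul_pow, sq_abs,
      real_inner_comm, inner_sub_right] at hd
    simp only [h_def]
    linear_combination hd
  have hh (x x' : E ×₂ Y) (hxx' : x.snd = x'.snd) : h x = h x' := by
    have h₁ := hsnd 1 x x'
    have h₂ := hsnd 1 x x
    rw [hxx'] at h₁ h₂
    linarith
  refine ⟨a, fun y => h (toLp 2 (0, y)), fun s y => (φ s (toLp 2 (0, y))).snd, ha,
    fun x => ?_, ⟨fun s y y' => hsnd s (toLp 2 (0, y)) (toLp 2 (0, y'))⟩⟩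
  change u x = ⟪a, x.fst⟫ + h (toLp 2 (0, x.snd))
  rw [← hh x (toLp 2 (0, x.snd)) rfl, h_def]
  ring

end EuclideanFactor

universe u

theorem exists_splitting_of_fst_eq_inner_add {E : Type*} [NormedAddCommGroup E]
    [InnerProductSpace ℝ E] [FiniteDimensional ℝ E] {Y Z : Type u} [MetricSpace Y] [MetricSpace Z]
    {a : E} {τ : ℝ} (hτ : 0 < τ) (haτ : ‖a‖ ^ 2 + τ ^ 2 = 1) {h : Y → ℝ} {ψ : ℝ → Y → Y}
    (hψ : IsTranslationFlow (τ ^ 2) h ψ) (G : E ×₂ Y ≃ᵢ ℝ ×₂ Z)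
    (hG : ∀ x, (G x).fst = ⟪a, x.fst⟫ + h x.snd) :
    ∃ (W : Type u) (_ : MetricSpace W),
      Nonempty (Y ≃ᵢ ℝ ×₂ W) ∧ Nonempty (Z ≃ᵢ ℝ^(finrank ℝ E) ×₂ W) := by
  have hψ₁ := hψ.rescale hτ.ne'
  let e := hψ₁.splitting
  let G' := (withLpProdAssoc 2 _ _ _).trans
    ((withLpProdCongr 2 (IsometryEquiv.refl E) e.symm).trans G)
  have hb : ‖(toLp 2 (a, τ) : E ×₂ ℝ)‖ = 1 := by
    rw [← pow_eq_one_iff_of_nonneg (norm_nonneg _) two_ne_zero, WithLp.prod_norm_sq_eq_of_L2]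
    simpa using haτ
  have hG' (x : (E ×₂ ℝ) ×₂ _) : (G' x).fst = ⟪toLp 2 (a, τ), x.fst⟫ + 0 := by
    have := hψ₁.coord_splitting_symm (toLp 2 (x.fst.snd, x.snd))
    rw [div_eq_iff hτ.ne'] at this
    simp only [G', e, IsometryEquiv.trans_apply, IsometryEquiv.withLpProdAssoc_apply,
      IsometryEquiv.withLpProdCongr_apply, Prod.map_apply, hG, toLp_fst, toLp_snd, this, mul_comm,
      prod_inner_apply, ofLp_fst, ofLp_snd, RCLike.inner_apply, Real.ringHom_apply, add_zero,
      add_left_inj]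
    rfl
  have hF : finrank ℝ (E ×₂ ℝ) = finrank ℝ E + 1 := by simp [WithLp.finrank_prod]
  exact ⟨_, inferInstance, ⟨e⟩, nonempty_isometryEquiv_of_fst_eq_inner hF hb 0 G' hG'⟩

theorem exists_common_splitting_real {Y Z : Type u} [MetricSpace Y] [MetricSpace Z]
    {k : ℕ} (G : ℝ^k ×₂ Y ≃ᵢ ℝ ×₂ Z) :
    ∃ (p q : ℕ) (W : Type u) (_ : MetricSpace W), k + p = 1 + q ∧
      Nonempty (Y ≃ᵢ ℝ^p ×₂ W) ∧ Nonempty (Z ≃ᵢ ℝ^q ×₂ W) := by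
  obtain ⟨a, h, ψ, ha, hu, hψ⟩ := G.isTranslationFlow_fst.exists_eq_inner_add
  rcases ha.lt_or_eq with ha | ha
  · have hτ_sq : √(1 - ‖a‖ ^ 2) ^ 2 = 1 - ‖a‖ ^ 2 := Real.sq_sqrt (by nlinarith [norm_nonneg a])
    rw [← hτ_sq] at hψ
    obtain ⟨W, _, ⟨eY⟩, hZ⟩ := exists_splitting_of_fst_eq_inner_add
      (Real.sqrt_pos.2 (by nlinarith [norm_nonneg a])) (by rw [hτ_sq]; ring) hψ G hu
    rw [finrank_euclideanSpace_fin] at hZ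
    exact ⟨1, k, W, inferInstance, add_comm k 1, ⟨eY.trans (withLpProdCongr 2
      (LinearIsometryEquiv.euclideanSpaceOfFinrankEq (finrank_self ℝ)).toIsometryEquiv
      (IsometryEquiv.refl W))⟩, hZ⟩
  · rw [ha, one_pow, sub_self] at hψ
    obtain ⟨c, hc⟩ := hψ.exists_forall_eq
    obtain ⟨n, rfl⟩ : ∃ n, k = n + 1 := Nat.exists_eq_succ_of_ne_zero (by
      rintro rfl
      simp [Subsingleton.elim a 0] at ha)
    exact ⟨0, n, Y, inferInstance, by omega, ⟨(withLpUniqueProd 2 _ _).symm⟩,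
      nonempty_isometryEquiv_of_fst_eq_inner finrank_euclideanSpace_fin ha c G
        fun x => by rw [hu, hc]⟩

theorem exists_common_splitting {X Y Z : Type u} [MetricSpace X] [MetricSpace Y] [MetricSpace Z]
    (k l : ℕ) (e₁ : X ≃ᵢ ℝ^k ×₂ Y) (e₂ : X ≃ᵢ ℝ^l ×₂ Z) :
    ∃ (p q : ℕ) (W : Type u) (_ : MetricSpace W), k + p = l + q ∧
      Nonempty (Y ≃ᵢ ℝ^p ×₂ W) ∧ Nonempty (Z ≃ᵢ ℝ^q ×₂ W) := by
  induction l generalizing X Y Z k with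
  | zero =>
    exact ⟨0, k, Y, inferInstance, by omega, ⟨(withLpUniqueProd 2 _ _).symm⟩,
      ⟨((withLpUniqueProd 2 _ _).symm.trans e₂.symm).trans e₁⟩⟩
  | succ l ih =>
    have hF : finrank ℝ (ℝ ×₂ ℝ^l) = l + 1 := by simp [WithLp.finrank_prod, add_comm]
    let line : ℝ^(l + 1) ≃ᵢ ℝ ×₂ ℝ^l :=
      (LinearIsometryEquiv.euclideanSpaceOfFinrankEq hF).symm.toIsometryEquiv
    obtain ⟨p₁, q₁, W₁, _, hpq₁, ⟨f₁⟩, ⟨f₂⟩⟩ := exists_common_splitting_real (e₁.symm.trans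
      (e₂.trans ((withLpProdCongr 2 line (IsometryEquiv.refl Z)).trans (withLpProdAssoc 2 _ _ Z))))
    obtain ⟨p₂, q₂, W, _, hpq₂, ⟨g₁⟩, ⟨g₂⟩⟩ := ih q₁ f₂ (IsometryEquiv.refl _)
    exact ⟨p₁ + p₂, q₂, W, inferInstance, by omega,
      ⟨(f₁.trans (withLpProdCongr 2 (IsometryEquiv.refl _) g₁)).trans
        (IsometryEquiv.euclideanSpaceProdAssoc _ _ W)⟩, ⟨g₂⟩⟩

/-- Kleiner–Lott, "Locally Collapsed 3-Manifolds", Lemma 4.3(2): any two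
splittings of a metric space are compatible with a third splitting. -/
theorem two_splittings_compatible_with_third {X Y Z : Type u}
    [MetricSpace X] [MetricSpace Y] [MetricSpace Z]
    (k l : ℕ)
    (e₁ : X ≃ᵢ WithLp 2 (EuclideanSpace ℝ (Fin k) × Y))
    (e₂ : X ≃ᵢ WithLp 2 (EuclideanSpace ℝ (Fin l) × Z)) :
    ∃ m : ℕ, k ≤ m ∧ l ≤ m ∧
      ∃ (W : Type u) (_ : MetricSpace W),
        Nonempty (X ≃ᵢ WithLp 2 (EuclideanSpace ℝ (Fin m) × W)) ∧
        Nonempty (Y ≃ᵢ WithLp 2 (EuclideanSpace ℝ (Fin (m - k)) × W)) ∧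
        Nonempty (Z ≃ᵢ WithLp 2 (EuclideanSpace ℝ (Fin (m - l)) × W)) := by
  obtain ⟨p, q, W, _, hpq, ⟨eY⟩, ⟨eZ⟩⟩ := exists_common_splitting k l e₁ e₂
  refine ⟨k + p, by omega, by omega, W, inferInstance,
    ⟨(e₁.trans (withLpProdCongr 2 (IsometryEquiv.refl _) eY)).trans
      (IsometryEquiv.euclideanSpaceProdAssoc k p W)⟩, ?_, ?_⟩
  · rw [Nat.add_sub_cancel_left]
    exact ⟨eY⟩
  · rw [show k + p - l = q by omega]
    exact ⟨eZ⟩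
end

section
/- For every k ∈ ℕ, every δ ∈ (0,1) and every C > 0 there exists δ' ∈ (0,1) with the following property. Let (X,⋆) be a complete pointed metric space and let f : (X,⋆) → (ℝᵏ ×₂ Z, (v,z)) be a (k,δ')-splitting of (X,⋆). Then for every x ∈ X with d(⋆, x) ≤ C, the same map f, regarded as a map of pointed spaces (X, x) → (ℝᵏ ×₂ Z, f(x)), is a (k,δ)-splitting of (X, x); in particular (X,x) admits a (k,δ)-splitting coming from a change of basepoint of f. (Kleiner–Lott, 'Locally Collapsed 3-Manifolds', Lemma 4.6.) -/
universe u v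

/-- A pointed `δ`-Gromov–Hausdorff approximation `f : (X, x₀) → (Y, y₀)`:
`f` maps the basepoint to the basepoint, distorts distances by at most `δ` on
the ball `B(x₀, 1/δ)`, and its image is `δ`-dense in `B(y₀, 1/δ - δ)`. -/
def IsGHApprox {X Y : Type*} [MetricSpace X] [MetricSpace Y]
    (δ : ℝ) (f : X → Y) (x₀ : X) (y₀ : Y) : Prop :=
  f x₀ = y₀ ∧
  (∀ x₁ ∈ Metric.ball x₀ (1 / δ), ∀ x₂ ∈ Metric.ball x₀ (1 / δ),
      |dist (f x₁) (f x₂) - dist x₁ x₂| ≤ δ) ∧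
  (∀ y ∈ Metric.ball y₀ (1 / δ - δ), ∃ x ∈ Metric.ball x₀ (1 / δ),
      dist y (f x) ≤ δ)

/-- Kleiner–Lott, "Locally Collapsed 3-Manifolds", Lemma 4.6: a sufficiently
fine `(k, δ')`-splitting of a complete pointed metric space remains a
`(k, δ)`-splitting after moving the basepoint a distance at most `C`. -/
theorem splitting_basepoint_change (k : ℕ) (δ : ℝ) (hδ0 : 0 < δ) (hδ1 : δ < 1)
    (C : ℝ) (hC : 0 < C) :
    ∃ δ' : ℝ, 0 < δ' ∧ δ' < 1 ∧
      ∀ (X : Type u) (_ : MetricSpace X) (_ : CompleteSpace X) (star : X)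
        (Z : Type v) (_ : MetricSpace Z) (z : Z) (v : EuclideanSpace ℝ (Fin k))
        (f : X → WithLp 2 (EuclideanSpace ℝ (Fin k) × Z)),
        IsGHApprox δ' f star
          ((WithLp.equiv 2 (EuclideanSpace ℝ (Fin k) × Z)).symm (v, z)) →
        ∀ x : X, dist star x ≤ C → IsGHApprox δ f x (f x) := by
  have hden : 0 < 1 / δ + C + 2 := by positivity
  refine ⟨min (δ / 2) (1 / (1 / δ + C + 2)), lt_min (by linarith) (by positivity),
    (min_le_left _ _).trans_lt (by linarith), ?_⟩
  set δ' := min (δ / 2) (1 / (1 / δ + C + 2)) with hδ'def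
  have hδ'0 : 0 < δ' := lt_min (by linarith) (by positivity)
  have hδ'δ : δ' ≤ δ / 2 := min_le_left _ _
  have hinv : 1 / δ + C + 2 ≤ 1 / δ' := by
    have h1 : 1 / (1 / (1 / δ + C + 2)) ≤ 1 / δ' :=
      one_div_le_one_div_of_le hδ'0 (min_le_right _ _)
    rwa [one_div_one_div] at h1
  have hδpos : 0 < 1 / δ := by positivity
  intro X _ _ star Z _ z v f hf x hx
  obtain ⟨hf0, hfd, hfs⟩ := hf
  have hxb : x ∈ Metric.ball star (1 / δ') := by
    rw [Metric.mem_ball, dist_comm]; linarith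
  have hsb : star ∈ Metric.ball star (1 / δ') := Metric.mem_ball_self (by linarith)
  refine ⟨rfl, ?_, ?_⟩
  · intro x₁ h₁ x₂ h₂
    rw [Metric.mem_ball] at h₁ h₂
    have h₁' : x₁ ∈ Metric.ball star (1 / δ') := by
      rw [Metric.mem_ball]
      have := dist_triangle x₁ x star
      have hxs : dist x star ≤ C := by rw [dist_comm]; exact hx
      linarith
    have h₂' : x₂ ∈ Metric.ball star (1 / δ') := by
      rw [Metric.mem_ball]
      have := dist_triangle x₂ x star
      have hxs : dist x star ≤ C := by rw [dist_comm]; exact hx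
      linarith
    exact (hfd x₁ h₁' x₂ h₂').trans (by linarith)
  · intro y hy
    rw [Metric.mem_ball] at hy
    have hdf := abs_le.mp (hfd star hsb x hxb)
    have hy' : y ∈ Metric.ball
        ((WithLp.equiv 2 (EuclideanSpace ℝ (Fin k) × Z)).symm (v, z)) (1 / δ' - δ') := by
      rw [Metric.mem_ball, ← hf0]
      have h1 : dist y (f star) ≤ dist y (f x) + dist (f x) (f star) := dist_triangle _ _ _
      have h2 : dist (f star) (f x) = dist (f x) (f star) := dist_comm _ _
      linarith
    obtain ⟨x', hx'b, hx'd⟩ := hfs y hy'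
    refine ⟨x', ?_, hx'd.trans (by linarith)⟩
    rw [Metric.mem_ball]
    have hdd := abs_le.mp (hfd x' hx'b x hxb)
    have h3 : dist (f x') (f x) ≤ dist (f x') y + dist y (f x) := dist_triangle _ _ _
    have h4 : dist y (f x') = dist (f x') y := dist_comm _ _
    linarith
end
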